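/- arXiv:2012.12137 — 10 statements merged into one kernel-verified Lean document; each statement's English description precedes it below -/
import Mathlib

section
/- Let ω > 0, let ξ ∈ (0,1), and let D > 0 satisfy D·ω ≤ 1. Define h : ℝ → ℝ by h(x) = e^{−xωξ}·sin(xω√(1−ξ²))/(ω√(1−ξ²)). Then h(0) = 0, h'(0) = 1, h satisfies the simple harmonic oscillator equation ω²·h(x) + 2ξω·h'(x) + h''(x) = 0 for all x ∈ ℝ, and for every x ∈ [0, D] one has h'(x) > 0, while for every x ∈ (0, D] one has h''(x) < 0 and moreover h''(0) = −2ξω < 0. -/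
/-!
Writing `a = ωξ` and `b = ω√(1-ξ²)`, `h x = e^{-ax} sin(bx) / b` is the damped sine, which solves
`h'' + 2a h' + (a² + b²) h = 0` with `a² + b² = ω²`. On `[0, D]` the phase `bx` is at most
`ωD ≤ 1 < π`, so `h > 0` on `(0, D]`, and `h' = e^{-ax} (cos(bx) - (a/b) sin(bx)) > 0` follows from
`sin y ≤ y` and `cos y ≥ 1 - y²/2`, since `ax + (bx)²/2 ≤ ξ + (1 - ξ²)/2 < 1`. The equation then forces `h'' = -ω² h - 2ξω h' < 0`.
-/

open Real

noncomputable section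

def dampedSin (a b x : ℝ) : ℝ := exp (-(x * a)) * sin (x * b) / b

def dampedSinDeriv (a b x : ℝ) : ℝ := exp (-(x * a)) * (b * cos (x * b) - a * sin (x * b)) / b

end

theorem hasDerivAt_exp_neg_mul (a x : ℝ) :
    HasDerivAt (fun x => exp (-(x * a))) (exp (-(x * a)) * -a) x :=
  (hasDerivAt_mul_const a).fun_neg.exp

namespace dampedSin

variable {a b : ℝ}

theorem hasDerivAt (x : ℝ) : HasDerivAt (dampedSin a b) (dampedSinDeriv a b x) x :=
  (((hasDerivAt_exp_neg_mul a x).mul (hasDerivAt_mul_const b).sin).div_const b).congr_deriv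
    (by simp only [dampedSinDeriv]; ring)

theorem hasDerivAt_dampedSinDeriv (x : ℝ) :
    HasDerivAt (dampedSinDeriv a b)
      (-(a ^ 2 + b ^ 2) * dampedSin a b x - 2 * a * dampedSinDeriv a b x) x := by
  have hcos := (hasDerivAt_mul_const (x := x) b).cos.const_mul b
  have hsin := (hasDerivAt_mul_const (x := x) b).sin.const_mul a
  exact (((hasDerivAt_exp_neg_mul a x).mul (hcos.fun_sub hsin)).div_const b).congr_deriv
    (by simp only [dampedSin, dampedSinDeriv]; ring)

theorem deriv_eq : deriv (dampedSin a b) = dampedSinDeriv a b :=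
  funext fun x => (hasDerivAt x).deriv

theorem deriv_deriv_eq (x : ℝ) :
    deriv (deriv (dampedSin a b)) x =
      -(a ^ 2 + b ^ 2) * dampedSin a b x - 2 * a * deriv (dampedSin a b) x := by
  rw [deriv_eq, (hasDerivAt_dampedSinDeriv x).deriv]

theorem apply_zero : dampedSin a b 0 = 0 := by
  simp [dampedSin]

theorem deriv_zero (hb : b ≠ 0) : deriv (dampedSin a b) 0 = 1 := by
  simp [deriv_eq, dampedSinDeriv, hb]

theorem pos (hb : 0 < b) {x : ℝ} (hx : 0 < x) (hxb : x * b < π) : 0 < dampedSin a b x :=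
  div_pos (mul_pos (exp_pos _) (sin_pos_of_pos_of_lt_pi (mul_pos hx hb) hxb)) hb

theorem deriv_pos (ha : 0 ≤ a) (hb : 0 < b) {x : ℝ} (hx : 0 ≤ x)
    (hsmall : x * a + (x * b) ^ 2 / 2 < 1) : 0 < deriv (dampedSin a b) x := by
  have hsin : a * sin (x * b) ≤ a * (x * b) :=
    mul_le_mul_of_nonneg_left (sin_le (mul_nonneg hx hb.le)) ha
  have hcos : b * (1 - (x * b) ^ 2 / 2) ≤ b * cos (x * b) :=
    mul_le_mul_of_nonneg_left one_sub_sq_div_two_le_cos hb.le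
  have hgap : 0 < b * (1 - (x * a + (x * b) ^ 2 / 2)) := mul_pos hb (by linarith)
  rw [deriv_eq]
  exact div_pos (mul_pos (exp_pos _) (by nlinarith)) hb

end dampedSin

theorem sq_add_sq_of_sq_eq_one_sub_sq {ξ s : ℝ} (ω : ℝ) (hs : s ^ 2 = 1 - ξ ^ 2) :
    (ω * ξ) ^ 2 + (ω * s) ^ 2 = ω ^ 2 := by
  rw [mul_pow, mul_pow, hs]
  ring

theorem mul_add_sq_mul_one_sub_sq_lt_one {ξ t : ℝ} (hξ0 : 0 < ξ) (hξ1 : ξ < 1) (ht0 : 0 ≤ t)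
    (ht1 : t ≤ 1) : ξ * t + t ^ 2 * (1 - ξ ^ 2) / 2 < 1 := by
  have hξt : ξ * t ≤ ξ := mul_le_of_le_one_right hξ0.le ht1
  have htt : t ^ 2 * (1 - ξ ^ 2) ≤ 1 - ξ ^ 2 :=
    mul_le_of_le_one_left (by nlinarith) (pow_le_one₀ ht0 ht1)
  nlinarith [sq_pos_of_pos (sub_pos.mpr hξ1)]

theorem stmt0_general (ω ξ D : ℝ) (hω : 0 < ω) (hξ : ξ ∈ Set.Ioo (0 : ℝ) 1)
    (hDω : D * ω ≤ 1)
    (h : ℝ → ℝ)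
    (hdef : ∀ x : ℝ, h x =
      Real.exp (-(x * ω * ξ)) * Real.sin (x * ω * Real.sqrt (1 - ξ ^ 2)) /
        (ω * Real.sqrt (1 - ξ ^ 2))) :
    h 0 = 0 ∧ deriv h 0 = 1 ∧
    (∀ x : ℝ, ω ^ 2 * h x + 2 * ξ * ω * deriv h x + deriv (deriv h) x = 0) ∧
    (∀ x ∈ Set.Icc (0 : ℝ) D, 0 < deriv h x) ∧
    (∀ x ∈ Set.Ioc (0 : ℝ) D, deriv (deriv h) x < 0) ∧
    deriv (deriv h) 0 = -(2 * ξ * ω) ∧ -(2 * ξ * ω) < 0 := by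
  obtain ⟨hξ0, hξ1⟩ := hξ
  set s := √(1 - ξ ^ 2)
  have hs2 : s ^ 2 = 1 - ξ ^ 2 := sq_sqrt (by nlinarith)
  have hb : 0 < ω * s := mul_pos hω (sqrt_pos.mpr (by nlinarith))
  obtain rfl : h = dampedSin (ω * ξ) (ω * s) := funext fun x => by
    rw [hdef, dampedSin, mul_assoc, mul_assoc]
  have hode (x : ℝ) : deriv (deriv (dampedSin (ω * ξ) (ω * s))) x =
      -(ω ^ 2 * dampedSin (ω * ξ) (ω * s) x) -
        2 * ξ * ω * deriv (dampedSin (ω * ξ) (ω * s)) x := by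
    rw [dampedSin.deriv_deriv_eq, ← sq_add_sq_of_sq_eq_one_sub_sq ω hs2]
    ring
  have hphase {x : ℝ} (hx : x ∈ Set.Icc 0 D) : x * ω ≤ 1 :=
    (mul_le_mul_of_nonneg_right hx.2 hω.le).trans hDω
  have hderiv_pos (x : ℝ) (hx : x ∈ Set.Icc 0 D) :
      0 < deriv (dampedSin (ω * ξ) (ω * s)) x := by
    refine dampedSin.deriv_pos (by positivity) hb hx.1 ?_
    rw [show x * (ω * ξ) + (x * (ω * s)) ^ 2 / 2 = ξ * (x * ω) + (x * ω) ^ 2 * s ^ 2 / 2 by ring,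
      hs2]
    exact mul_add_sq_mul_one_sub_sq_lt_one hξ0 hξ1 (mul_nonneg hx.1 hω.le) (hphase hx)
  refine ⟨dampedSin.apply_zero, dampedSin.deriv_zero hb.ne', fun x => by rw [hode]; ring,
    hderiv_pos, fun x hx => ?_, ?_, by nlinarith⟩
  · have hs1 : s ≤ 1 := sqrt_le_one.mpr (by nlinarith)
    have hh := dampedSin.pos (a := ω * ξ) hb hx.1 (by
      nlinarith [pi_gt_three, hphase (Set.Ioc_subset_Icc_self hx), hx.1])
    rw [hode]
    nlinarith [mul_pos (mul_pos hξ0 hω) (hderiv_pos x (Set.Ioc_subset_Icc_self hx)),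
      mul_pos (pow_pos hω 2) hh]
  · rw [hode, dampedSin.apply_zero, dampedSin.deriv_zero hb.ne']
    ring

/-- **Underdamped harmonic oscillator solution.**
Let `ω > 0`, `ξ ∈ (0,1)`, `D > 0` with `D·ω ≤ 1`.  Define
`h x = exp (-(x ω ξ)) · sin (x ω √(1-ξ²)) / (ω √(1-ξ²))`.  Then `h 0 = 0`, `h' 0 = 1`,
`h` satisfies the simple harmonic oscillator equation `ω² h + 2ξω h' + h'' = 0` on all of `ℝ`,
`h' > 0` on `[0, D]`, `h'' < 0` on `(0, D]`, and `h'' 0 = -2ξω < 0`. -/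
theorem stmt0 (ω ξ D : ℝ) (hω : 0 < ω) (hξ : ξ ∈ Set.Ioo (0 : ℝ) 1) (hD : 0 < D)
    (hDω : D * ω ≤ 1)
    (h : ℝ → ℝ)
    (hdef : ∀ x : ℝ, h x =
      Real.exp (-(x * ω * ξ)) * Real.sin (x * ω * Real.sqrt (1 - ξ ^ 2)) /
        (ω * Real.sqrt (1 - ξ ^ 2))) :
    h 0 = 0 ∧ deriv h 0 = 1 ∧
    (∀ x : ℝ, ω ^ 2 * h x + 2 * ξ * ω * deriv h x + deriv (deriv h) x = 0) ∧
    (∀ x ∈ Set.Icc (0 : ℝ) D, 0 < deriv h x) ∧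
    (∀ x ∈ Set.Ioc (0 : ℝ) D, deriv (deriv h) x < 0) ∧
    deriv (deriv h) 0 = -(2 * ξ * ω) ∧ -(2 * ξ * ω) < 0 :=
  stmt0_general ω ξ D hω hξ hDω h hdef
end

section
/- Let ω > 0, let ξ > 1, and let D > 0 satisfy tanh(Dω√(ξ²−1)) < √(ξ²−1)/ξ. Define h : ℝ → ℝ by h(x) = e^{−xωξ}·sinh(xω√(ξ²−1))/(ω√(ξ²−1)). Then h(0) = 0, h'(0) = 1, h satisfies ω²·h(x) + 2ξω·h'(x) + h''(x) = 0 for all x ∈ ℝ, and for every x ∈ [0, D] one has h'(x) > 0, while for every x ∈ (0, D] one has h''(x) < 0 and moreover h''(0) = −2ξω < 0. -/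
/-!
With `a = ωξ` and `b = ω√(ξ²-1)` one has `a² - b² = ω²`, and `h = e^{-ax} sinh(bx) / b`.
Every function `e^{-ax}(p cosh(bx) + q sinh(bx))` solves `(a² - b²) f + 2a f' + f'' = 0`, and
differentiation acts on such functions linearly in the coefficients `(p, q)`. The sign
conditions reduce to `a sinh t < b cosh t` for `0 ≤ t ≤ bD`, i.e. `tanh t < b / a`, which
follows from the hypothesis because `tanh` is monotone; for `h''` one uses in addition `b ≤ a`.
-/

open Real

theorem Real.monotone_tanh : Monotone tanh := by
  intro x y hxy
  by_contra! hlt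
  have := artanh_lt_artanh (neg_one_lt_tanh y) (tanh_lt_one x) hlt
  rw [artanh_tanh, artanh_tanh] at this
  linarith

theorem Real.mul_sinh_lt_mul_cosh_of_tanh_lt {a b t T : ℝ} (ha : 0 < a) (htT : t ≤ T)
    (hT : tanh T < b / a) : a * sinh t < b * cosh t := by
  have htanh : sinh t / cosh t < b / a :=
    tanh_eq_sinh_div_cosh t ▸ (monotone_tanh htT).trans_lt hT
  rw [div_lt_div_iff₀ (cosh_pos t) ha] at htanh
  linarith

noncomputable def dampedHyp (a b p q : ℝ) (x : ℝ) : ℝ :=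
  exp (-(a * x)) * (p * cosh (b * x) + q * sinh (b * x))

namespace dampedHyp

variable (a b p q : ℝ)

theorem hasDerivAt (x : ℝ) :
    HasDerivAt (dampedHyp a b p q) (dampedHyp a b (b * q - a * p) (b * p - a * q) x) x := by
  have hlin : ∀ c : ℝ, HasDerivAt (fun x : ℝ => c * x) c x := fun c => by
    simpa using (hasDerivAt_id x).const_mul c
  have := ((hlin a).neg.exp).mul
    (((hlin b).cosh.const_mul p).add ((hlin b).sinh.const_mul q))
  exact this.congr_deriv (by simp only [dampedHyp, Pi.neg_apply, Pi.add_apply]; ring)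

theorem deriv_eq :
    deriv (dampedHyp a b p q) = dampedHyp a b (b * q - a * p) (b * p - a * q) :=
  funext fun x => (hasDerivAt a b p q x).deriv

theorem ode (x : ℝ) :
    (a ^ 2 - b ^ 2) * dampedHyp a b p q x + 2 * a * deriv (dampedHyp a b p q) x
      + deriv (deriv (dampedHyp a b p q)) x = 0 := by
  simp only [deriv_eq, dampedHyp]
  ring

variable {a b}

theorem deriv_zero_inv (hb : b ≠ 0) :
    deriv (dampedHyp a b 0 b⁻¹) = dampedHyp a b 1 (-(a / b)) := by
  rw [deriv_eq]
  congr 1 <;> field_simp <;> ring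

theorem deriv_one_neg_div (hb : b ≠ 0) :
    deriv (dampedHyp a b 1 (-(a / b))) = dampedHyp a b (-(2 * a)) ((a ^ 2 + b ^ 2) / b) := by
  rw [deriv_eq]
  congr 1 <;> field_simp <;> ring

theorem one_neg_div_pos_of_mul_sinh_lt {x : ℝ} (hb : 0 < b)
    (h : a * sinh (b * x) < b * cosh (b * x)) : 0 < dampedHyp a b 1 (-(a / b)) x := by
  have : a / b * sinh (b * x) < cosh (b * x) := by
    rw [div_mul_eq_mul_div, div_lt_iff₀ hb]
    linarith
  exact mul_pos (exp_pos _) (by linarith)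

theorem neg_two_mul_neg_of_mul_sinh_lt {x : ℝ} (ha : 0 < a) (hb : 0 < b) (hba : b ^ 2 ≤ a ^ 2)
    (hx : 0 ≤ x) (h : a * sinh (b * x) < b * cosh (b * x)) :
    dampedHyp a b (-(2 * a)) ((a ^ 2 + b ^ 2) / b) x < 0 := by
  have hsinh : 0 ≤ sinh (b * x) := sinh_nonneg_iff.mpr (by positivity)
  have : (a ^ 2 + b ^ 2) / b * sinh (b * x) < 2 * a * cosh (b * x) := by
    rw [div_mul_eq_mul_div, div_lt_iff₀ hb]
    nlinarith [mul_lt_mul_of_pos_left h ha, mul_nonneg (sub_nonneg.mpr hba) hsinh]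
  exact mul_neg_of_pos_of_neg (exp_pos _) (by linarith)

end dampedHyp

theorem stmt1_general (ω ξ D : ℝ) (hω : 0 < ω) (hξ : 1 < ξ)
    (hDω : Real.tanh (D * ω * Real.sqrt (ξ ^ 2 - 1)) < Real.sqrt (ξ ^ 2 - 1) / ξ)
    (h : ℝ → ℝ)
    (hdef : ∀ x : ℝ, h x =
      Real.exp (-(x * ω * ξ)) * Real.sinh (x * ω * Real.sqrt (ξ ^ 2 - 1)) /
        (ω * Real.sqrt (ξ ^ 2 - 1))) :
    h 0 = 0 ∧ deriv h 0 = 1 ∧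
    (∀ x : ℝ, ω ^ 2 * h x + 2 * ξ * ω * deriv h x + deriv (deriv h) x = 0) ∧
    (∀ x ∈ Set.Icc (0 : ℝ) D, 0 < deriv h x) ∧
    (∀ x ∈ Set.Ioc (0 : ℝ) D, deriv (deriv h) x < 0) ∧
    deriv (deriv h) 0 = -(2 * ξ * ω) ∧ -(2 * ξ * ω) < 0 := by
  set s := √(ξ ^ 2 - 1)
  have hs : 0 < s := sqrt_pos.mpr (by nlinarith)
  set a := ω * ξ
  set b := ω * s
  have ha : 0 < a := by positivity
  have hb : 0 < b := by positivity
  have hab : a ^ 2 - b ^ 2 = ω ^ 2 := by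
    linear_combination (-ω ^ 2) * sq_sqrt (show (0 : ℝ) ≤ ξ ^ 2 - 1 by nlinarith)
  have hba : b ^ 2 ≤ a ^ 2 := by nlinarith
  have hh : h = dampedHyp a b 0 b⁻¹ := funext fun x => by
    rw [hdef, dampedHyp]
    simp only [a, b]
    ring_nf
  have hh' : deriv h = dampedHyp a b 1 (-(a / b)) := hh ▸ dampedHyp.deriv_zero_inv hb.ne'
  have hh'' : deriv (deriv h) = dampedHyp a b (-(2 * a)) ((a ^ 2 + b ^ 2) / b) :=
    hh' ▸ dampedHyp.deriv_one_neg_div hb.ne'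
  have hsinh_lt : ∀ x ∈ Set.Icc 0 D, a * sinh (b * x) < b * cosh (b * x) := fun x hx =>
    mul_sinh_lt_mul_cosh_of_tanh_lt ha (T := D * ω * s) (by nlinarith [hx.2])
      (by rwa [mul_div_mul_left _ _ hω.ne'])
  refine ⟨by simp [hdef], by simp [hh', dampedHyp], fun x => ?_,
    fun x hx => hh' ▸ dampedHyp.one_neg_div_pos_of_mul_sinh_lt hb (hsinh_lt x hx),
    fun x hx => hh'' ▸ dampedHyp.neg_two_mul_neg_of_mul_sinh_lt ha hb hba hx.1.le
      (hsinh_lt x (Set.Ioc_subset_Icc_self hx)),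
    by simp [hh'', dampedHyp, a]; ring, by nlinarith⟩
  have := dampedHyp.ode a b 0 b⁻¹ x
  rw [← hh, hab] at this
  linear_combination this

/-- **Overdamped harmonic oscillator solution.**
Let `ω > 0`, `ξ > 1`, `D > 0` with `tanh (D ω √(ξ²-1)) < √(ξ²-1)/ξ`.  Define
`h x = exp (-(x ω ξ)) · sinh (x ω √(ξ²-1)) / (ω √(ξ²-1))`.  Then `h 0 = 0`, `h' 0 = 1`,
`h` satisfies the simple harmonic oscillator equation `ω² h + 2ξω h' + h'' = 0` on all of `ℝ`,
`h' > 0` on `[0, D]`, `h'' < 0` on `(0, D]`, and `h'' 0 = -2ξω < 0`. -/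
theorem stmt1 (ω ξ D : ℝ) (hω : 0 < ω) (hξ : 1 < ξ) (hD : 0 < D)
    (hDω : Real.tanh (D * ω * Real.sqrt (ξ ^ 2 - 1)) < Real.sqrt (ξ ^ 2 - 1) / ξ)
    (h : ℝ → ℝ)
    (hdef : ∀ x : ℝ, h x =
      Real.exp (-(x * ω * ξ)) * Real.sinh (x * ω * Real.sqrt (ξ ^ 2 - 1)) /
        (ω * Real.sqrt (ξ ^ 2 - 1))) :
    h 0 = 0 ∧ deriv h 0 = 1 ∧
    (∀ x : ℝ, ω ^ 2 * h x + 2 * ξ * ω * deriv h x + deriv (deriv h) x = 0) ∧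
    (∀ x ∈ Set.Icc (0 : ℝ) D, 0 < deriv h x) ∧
    (∀ x ∈ Set.Ioc (0 : ℝ) D, deriv (deriv h) x < 0) ∧
    deriv (deriv h) 0 = -(2 * ξ * ω) ∧ -(2 * ξ * ω) < 0 :=
  stmt1_general ω ξ D hω hξ hDω h hdef
end

section
/- Let D, ℓ, β > 0 satisfy D²ℓβ < 8, and set a = 4/(D²β), ω_N = √(aβ)/2 = 1/D, and ξ = (Dℓ/4)·√(β/a) = D²ℓβ/8 ∈ (0,1). Then a ≥ ℓ/2, and the constant c = e^{Dω_Nξ} / (cos(Dω_N√(1−ξ²)) − (ξ/√(1−ξ²))·sin(Dω_N√(1−ξ²))) satisfies c ≤ 2e/(1 − D²ℓβ/8)². -/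
/-!
With `a = 4/(D²β)` the parameters collapse to `D ω_N = 1` and `ξ = D²ℓβ/8`, so
`c = e^ξ / (cos s - (ξ/s) sin s)` with `s = √(1-ξ²)`. The bounds `cos s ≥ 1 - s²/2` and
`sin s ≤ s` give a denominator of at least `1 - s²/2 - ξ = (1-ξ)²/2`, and `e^ξ ≤ e`.
-/

open Real

lemma one_sub_sq_div_two_sub_le_cos_sub_div_mul_sin {ξ s : ℝ} (hξ : 0 ≤ ξ) (hs : 0 ≤ s) :
    1 - s ^ 2 / 2 - ξ ≤ cos s - ξ / s * sin s := by
  have hsin : ξ / s * sin s ≤ ξ := by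
    rcases hs.eq_or_lt with rfl | hs
    · simpa using hξ
    · rw [div_mul_eq_mul_div, div_le_iff₀ hs]
      exact mul_le_mul_of_nonneg_left (sin_le hs.le) hξ
  linarith [one_sub_sq_div_two_le_cos (x := s)]

lemma sq_one_sub_div_two_le_underdamped_denom {ξ : ℝ} (hξ0 : 0 ≤ ξ) (hξ1 : ξ ≤ 1) :
    (1 - ξ) ^ 2 / 2 ≤ cos √(1 - ξ ^ 2) - ξ / √(1 - ξ ^ 2) * sin √(1 - ξ ^ 2) := by
  have hsq : √(1 - ξ ^ 2) ^ 2 = 1 - ξ ^ 2 := sq_sqrt (by nlinarith)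
  have := one_sub_sq_div_two_sub_le_cos_sub_div_mul_sin hξ0 (sqrt_nonneg (1 - ξ ^ 2))
  nlinarith

lemma exp_div_underdamped_denom_le {ξ : ℝ} (hξ0 : 0 ≤ ξ) (hξ1 : ξ < 1) :
    exp ξ / (cos √(1 - ξ ^ 2) - ξ / √(1 - ξ ^ 2) * sin √(1 - ξ ^ 2)) ≤
      2 * exp 1 / (1 - ξ) ^ 2 :=
  calc exp ξ / (cos √(1 - ξ ^ 2) - ξ / √(1 - ξ ^ 2) * sin √(1 - ξ ^ 2))
      ≤ exp 1 / ((1 - ξ) ^ 2 / 2) :=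
        div_le_div₀ (exp_pos 1).le (exp_le_exp.mpr hξ1.le) (by nlinarith)
          (sq_one_sub_div_two_le_underdamped_denom hξ0 hξ1.le)
    _ = 2 * exp 1 / (1 - ξ) ^ 2 := by rw [div_div_eq_mul_div]; ring

lemma sqrt_four_div_sq_mul_mul_div_two {D β : ℝ} (hD : 0 < D) (hβ : 0 < β) :
    √(4 / (D ^ 2 * β) * β) / 2 = 1 / D := by
  have : 4 / (D ^ 2 * β) * β = (2 / D) ^ 2 := by field_simp; norm_num
  rw [this, sqrt_sq (by positivity)]
  ring

lemma mul_div_four_mul_sqrt_div_four_div {D ℓ β : ℝ} (hD : 0 < D) (hβ : 0 < β) :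
    D * ℓ / 4 * √(β / (4 / (D ^ 2 * β))) = D ^ 2 * ℓ * β / 8 := by
  have : β / (4 / (D ^ 2 * β)) = (D * β / 2) ^ 2 := by field_simp; ring
  rw [this, sqrt_sq (by positivity)]
  ring

/-- **Bounds on the contraction constants in the underdamped case.**
Let `D, ℓ, β > 0` with `D²ℓβ < 8`, and set `a = 4/(D²β)`, `ω_N = √(aβ)/2`,
`ξ = (Dℓ/4)√(β/a)`.  Then `ω_N = 1/D`, `ξ = D²ℓβ/8 ∈ (0,1)`, `a ≥ ℓ/2`, and
`c = exp (D ω_N ξ) / (cos (D ω_N √(1-ξ²)) - (ξ/√(1-ξ²)) sin (D ω_N √(1-ξ²)))`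
satisfies `c ≤ 2e/(1 - D²ℓβ/8)²`. -/
theorem stmt3 (D ℓ β : ℝ) (hD : 0 < D) (hℓ : 0 < ℓ) (hβ : 0 < β)
    (h8 : D ^ 2 * ℓ * β < 8) :
    let a := 4 / (D ^ 2 * β)
    let ωN := Real.sqrt (a * β) / 2
    let ξ := D * ℓ / 4 * Real.sqrt (β / a)
    let c := Real.exp (D * ωN * ξ) /
      (Real.cos (D * ωN * Real.sqrt (1 - ξ ^ 2)) -
        ξ / Real.sqrt (1 - ξ ^ 2) * Real.sin (D * ωN * Real.sqrt (1 - ξ ^ 2)))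
    ωN = 1 / D ∧ ξ = D ^ 2 * ℓ * β / 8 ∧ ξ ∈ Set.Ioo (0 : ℝ) 1 ∧
    ℓ / 2 ≤ a ∧ c ≤ 2 * Real.exp 1 / (1 - D ^ 2 * ℓ * β / 8) ^ 2 := by
  intro a ωN ξ c
  have hωN : ωN = 1 / D := sqrt_four_div_sq_mul_mul_div_two hD hβ
  have hξ : ξ = D ^ 2 * ℓ * β / 8 := mul_div_four_mul_sqrt_div_four_div hD hβ
  have hξ0 : 0 < ξ := by rw [hξ]; positivity
  have hξ1 : ξ < 1 := by rw [hξ]; linarith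
  have hDωN : D * ωN = 1 := by rw [hωN]; field_simp
  refine ⟨hωN, hξ, ⟨hξ0, hξ1⟩, ?_, ?_⟩
  · rw [le_div_iff₀ (by positivity)]
    linarith
  · change exp (D * ωN * ξ) / (cos (D * ωN * √(1 - ξ ^ 2)) -
      ξ / √(1 - ξ ^ 2) * sin (D * ωN * √(1 - ξ ^ 2))) ≤ _
    rw [hDωN, one_mul, one_mul, ← hξ]
    exact exp_div_underdamped_denom_le hξ0.le hξ1
end

section
/- For every real x > 0, cosh(x·tanh(x)) − sinh(x·tanh(x))/tanh(x) ≥ 8x·e^{−2x} / ((e^{x}+e^{−x})²·(e^{x}−e^{−x})) ≥ 2x·e^{−5x}. -/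
/-!
With `t = tanh x`, the left-hand side is `sinh (x (1 - t)) / sinh x`, and `1 - t = e^{-x} / cosh x`,
while the middle term is `x (1 - t)² / sinh x`. The first inequality is then `sinh u ≥ u ≥ u (1 - t)`
for `u = x (1 - t) > 0`; the second comes from `cosh x ≤ e^x` and `2 sinh x ≤ e^x`.
-/

namespace Real

theorem cosh_sub_sinh_div_tanh {x : ℝ} (hx : x ≠ 0) (y : ℝ) :
    cosh y - sinh y / tanh x = sinh (x - y) / sinh x := by
  have hs : sinh x ≠ 0 := sinh_ne_zero.2 hx
  rw [sinh_sub, tanh_eq_sinh_div_cosh]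
  field_simp

theorem one_sub_tanh (x : ℝ) : 1 - tanh x = exp (-x) / cosh x := by
  rw [← cosh_sub_sinh, tanh_eq_sinh_div_cosh]
  field_simp

theorem exp_add_exp_neg_sq_mul_exp_sub_exp_neg (x : ℝ) :
    (exp x + exp (-x)) ^ 2 * (exp x - exp (-x)) = 8 * (cosh x ^ 2 * sinh x) := by
  rw [cosh_eq, sinh_eq]
  ring

theorem two_mul_cosh_sq_mul_sinh_le_exp {x : ℝ} (hx : 0 ≤ x) :
    2 * (cosh x ^ 2 * sinh x) ≤ exp (3 * x) := by
  have hcosh : cosh x ≤ exp x := by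
    rw [cosh_eq]
    linarith [exp_le_exp.2 (show -x ≤ x by linarith)]
  have hsinh : 2 * sinh x ≤ exp x := by
    rw [sinh_eq]
    linarith [exp_pos (-x)]
  calc 2 * (cosh x ^ 2 * sinh x) = cosh x ^ 2 * (2 * sinh x) := by ring
    _ ≤ exp x ^ 2 * exp x := by gcongr
    _ = exp (3 * x) := by rw [← pow_succ, ← exp_nat_mul]; norm_num

theorem mul_exp_neg_two_mul_div_eq_mul_one_sub_tanh_sq (x : ℝ) :
    x * exp (-(2 * x)) / (cosh x ^ 2 * sinh x) = x * (1 - tanh x) ^ 2 / sinh x := by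
  rw [one_sub_tanh, div_pow, ← exp_nat_mul]
  field_simp
  ring_nf

end Real

open Real

/-- For every real `x > 0`,
`cosh (x tanh x) - sinh (x tanh x)/tanh x ≥ 8x e^{-2x}/((e^x+e^{-x})² (e^x - e^{-x})) ≥ 2x e^{-5x}`. -/
theorem stmt6 (x : ℝ) (hx : 0 < x) :
    Real.cosh (x * Real.tanh x) - Real.sinh (x * Real.tanh x) / Real.tanh x ≥
      8 * x * Real.exp (-(2 * x)) /
        ((Real.exp x + Real.exp (-x)) ^ 2 * (Real.exp x - Real.exp (-x))) ∧
    8 * x * Real.exp (-(2 * x)) /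
        ((Real.exp x + Real.exp (-x)) ^ 2 * (Real.exp x - Real.exp (-x))) ≥
      2 * x * Real.exp (-(5 * x)) := by
  have hsinh : 0 < sinh x := sinh_pos_iff.2 hx
  have hgap : 0 < 1 - tanh x := sub_pos.2 (tanh_lt_one x)
  have htanh : 0 < tanh x := tanh_eq_sinh_div_cosh x ▸ div_pos hsinh (cosh_pos x)
  rw [exp_add_exp_neg_sq_mul_exp_sub_exp_neg, mul_assoc, mul_div_mul_left _ _ (by norm_num)]
  constructor
  · rw [mul_exp_neg_two_mul_div_eq_mul_one_sub_tanh_sq, cosh_sub_sinh_div_tanh hx.ne',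
      ge_iff_le, div_le_div_iff_of_pos_right hsinh, show x - x * tanh x = x * (1 - tanh x) by ring]
    calc x * (1 - tanh x) ^ 2 = x * (1 - tanh x) * (1 - tanh x) := by ring
      _ ≤ x * (1 - tanh x) := mul_le_of_le_one_right (by positivity) (by linarith)
      _ ≤ sinh (x * (1 - tanh x)) := self_le_sinh_iff.2 (by positivity)
  · rw [ge_iff_le, le_div_iff₀ (by positivity)]
    calc 2 * x * exp (-(5 * x)) * (cosh x ^ 2 * sinh x)
        = x * exp (-(5 * x)) * (2 * (cosh x ^ 2 * sinh x)) := by ring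
      _ ≤ x * exp (-(5 * x)) * exp (3 * x) := by
          gcongr
          exact two_mul_cosh_sq_mul_sinh_le_exp hx.le
      _ = x * exp (-(2 * x)) := by rw [mul_assoc, ← exp_add]; ring_nf
end

section
/- Let n ≥ 1, let K ⊆ ℝⁿ be a compact convex set that contains the closed Euclidean ball of radius r > 0 centered at the origin and has diameter at most D, and let g : ℝⁿ → ℝ be ℓ-Lipschitz with ℓ > 0. Let π_g be the probability measure on K with density proportional to e^{−g(x)}, and let π_0 be the uniform probability measure on K. Then 0 ≤ KL(π_g ‖ π_0) ≤ min_{x∈K} g(x) − ∫ g dπ_g + n·log( max{ 2/r , (r+√(r²+D²))·ℓ/(r·log 2) } ) + log(2·Dⁿ). -/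
/-!
The measure `π_g` is the tilt of the uniform measure `π₀` by `-g`, so
`log (dπ_g/dπ₀) = -g - log ∫ e^{-g} dπ₀` and the divergence equals `-∫ g dπ_g - log ∫ e^{-g} dπ₀`;
it is nonnegative by Gibbs' inequality. For the upper bound, let `x₀ ∈ K` minimise `g` and shrink
`K` towards `x₀` by the factor `t = 1/(M D)`, where `M` is the maximum in the statement. By
convexity the shrunken copy lies in `K`; it has `π₀`-mass `tⁿ`, and on it
`g ≤ g x₀ + ℓ t D ≤ g x₀ + log 2`. Hence `∫ e^{-g} dπ₀ ≥ e^{-g x₀} tⁿ / 2`.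
-/

open MeasureTheory ProbabilityTheory Real AffineMap Metric Module
open scoped ENNReal NNReal

namespace MeasureTheory

variable {α : Type*} {mα : MeasurableSpace α}

lemma tilted_eq_inv_lintegral_smul_withDensity {ν : Measure α} [NeZero ν] {f : α → ℝ}
    (hf : Integrable (fun x ↦ exp (f x)) ν) :
    ν.tilted f = (∫⁻ x, ENNReal.ofReal (exp (f x)) ∂ν)⁻¹ •
      ν.withDensity fun x ↦ ENNReal.ofReal (exp (f x)) := by
  have hpos := integral_exp_pos hf
  rw [← ofReal_integral_eq_lintegral_ofReal hf (ae_of_all _ fun x ↦ (exp_pos (f x)).le),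
    ← withDensity_smul' _ _ (ENNReal.inv_ne_top.2 (ENNReal.ofReal_pos.2 hpos).ne'),
    Measure.tilted]
  congr 1
  funext x
  rw [Pi.smul_apply, smul_eq_mul, div_eq_inv_mul, ENNReal.ofReal_mul (inv_nonneg.2 hpos.le),
    ENNReal.ofReal_inv_of_pos hpos]

lemma tilted_smul_measure {c : ℝ≥0∞} (hc₀ : c ≠ 0) (hc : c ≠ ∞) (ν : Measure α) (f : α → ℝ) :
    (c • ν).tilted f = ν.tilted f := by
  have hdensity : (fun x ↦ ENNReal.ofReal (exp (f x) / ∫ x, exp (f x) ∂(c • ν))) =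
      c⁻¹ • fun x ↦ ENNReal.ofReal (exp (f x) / ∫ x, exp (f x) ∂ν) := by
    funext x
    rw [integral_smul_measure, smul_eq_mul, Pi.smul_apply, smul_eq_mul,
      ← ENNReal.ofReal_toReal (ENNReal.inv_ne_top.2 hc₀), ← ENNReal.ofReal_mul (by positivity),
      ENNReal.toReal_inv]
    congr 1
    ring
  rw [Measure.tilted, Measure.tilted, withDensity_smul_measure, hdensity,
    withDensity_smul' _ _ (ENNReal.inv_ne_top.2 hc₀), smul_smul, ENNReal.mul_inv_cancel hc₀ hc,
    one_smul]

lemma tilted_cond {μ : Measure α} {s : Set α} (hs₀ : μ s ≠ 0) (hs : μ s ≠ ∞) {f : α → ℝ}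
    (hf : IntegrableOn (fun x ↦ exp (f x)) s μ) :
    μ[|s].tilted f = (∫⁻ x in s, ENNReal.ofReal (exp (f x)) ∂μ)⁻¹ •
      (μ.restrict s).withDensity fun x ↦ ENNReal.ofReal (exp (f x)) := by
  have : NeZero (μ.restrict s) := ⟨by rwa [Ne, Measure.restrict_eq_zero]⟩
  rw [ProbabilityTheory.cond,
    tilted_smul_measure (ENNReal.inv_ne_zero.2 hs) (ENNReal.inv_ne_top.2 hs₀),
    tilted_eq_inv_lintegral_smul_withDensity hf]

lemma integral_llr_tilted_left_self {ν : Measure α} [SigmaFinite ν] [NeZero ν] {f : α → ℝ}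
    (hf : Integrable (fun x ↦ exp (f x)) ν) (hfi : Integrable f (ν.tilted f)) :
    ∫ x, llr (ν.tilted f) ν x ∂(ν.tilted f) =
      ∫ x, f x ∂(ν.tilted f) - log (∫ x, exp (f x) ∂ν) := by
  have := isProbabilityMeasure_tilted hf
  refine (integral_congr_ae
    ((tilted_absolutelyContinuous ν f).ae_le (log_rnDeriv_tilted_left_self hf))).trans ?_
  rw [integral_sub hfi (integrable_const _), integral_const, probReal_univ, one_smul]

lemma integral_llr_nonneg {μ ν : Measure α} [IsProbabilityMeasure μ] [IsProbabilityMeasure ν]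
    (h : μ ≪ ν) : 0 ≤ ∫ x, llr μ ν x ∂μ := by
  rw [← InformationTheory.toReal_klDiv_of_measure_eq h (by simp)]
  exact ENNReal.toReal_nonneg

end MeasureTheory

lemma Convex.image_homothety_subset {E : Type*} [AddCommGroup E] [Module ℝ E] {K : Set E}
    (hK : Convex ℝ K) {x : E} (hx : x ∈ K) {t : ℝ} (ht₀ : 0 ≤ t) (ht₁ : t ≤ 1) :
    homothety x t '' K ⊆ K := by
  rintro _ ⟨y, hy, rfl⟩
  exact hK.lineMap_mem hx hy ⟨ht₀, ht₁⟩

section Compact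

variable {E : Type*} [TopologicalSpace E] [T2Space E] [MeasurableSpace E] [OpensMeasurableSpace E]
  {μ : Measure E} [IsFiniteMeasureOnCompacts μ] {K : Set E}

lemma ContinuousOn.integrable_cond {h : E → ℝ} (hh : ContinuousOn h K) (hK : IsCompact K)
    (h₀ : μ K ≠ 0) : Integrable h μ[|K] :=
  (hh.integrableOn_compact hK).smul_measure (ENNReal.inv_ne_top.2 h₀)

lemma integral_llr_tilted_cond_neg (hK : IsCompact K) (h₀ : μ K ≠ 0) {g : E → ℝ}
    (hg : Continuous g) :
    ∫ x, llr (μ[|K].tilted fun x ↦ -g x) μ[|K] x ∂(μ[|K].tilted fun x ↦ -g x) =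
      -∫ x, g x ∂(μ[|K].tilted fun x ↦ -g x) - log (∫ x, exp (-g x) ∂μ[|K]) := by
  have := cond_isProbabilityMeasure_of_finite h₀ hK.measure_lt_top.ne
  have hexp := hg.neg.rexp.continuousOn.integrable_cond hK h₀
  have hgi : Integrable g (μ[|K].tilted fun x ↦ -g x) :=
    (integrable_tilted_iff hexp g).2 ((hg.neg.rexp.mul hg).continuousOn.integrable_cond hK h₀)
  rw [← integral_neg]
  exact integral_llr_tilted_left_self hexp hgi.neg

end Compact

section Homothety

variable {E : Type*} [NormedAddCommGroup E] [NormedSpace ℝ E] [MeasurableSpace E] [BorelSpace E]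
  [FiniteDimensional ℝ E] (μ : Measure E) [μ.IsAddHaarMeasure] {K : Set E} {x : E} {t : ℝ}

lemma measureReal_cond_image_homothety (hK : Convex ℝ K) (hKm : MeasurableSet K) (h₀ : μ K ≠ 0)
    (h : μ K ≠ ∞) (hx : x ∈ K) (ht₀ : 0 ≤ t) (ht₁ : t ≤ 1) :
    μ[|K].real (homothety x t '' K) = t ^ finrank ℝ E := by
  rw [measureReal_def, cond_apply hKm, Set.inter_eq_right.2 (hK.image_homothety_subset hx ht₀ ht₁),
    Measure.addHaar_image_homothety, mul_left_comm, ENNReal.inv_mul_cancel h₀ h, mul_one,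
    abs_of_nonneg (by positivity), ENNReal.toReal_ofReal (by positivity)]

lemma exp_neg_mul_pow_le_integral_exp_neg_cond (hKc : IsCompact K) (hK : Convex ℝ K)
    (h₀ : μ K ≠ 0) {g : E → ℝ} {ℓ : ℝ≥0} (hg : LipschitzWith ℓ g) (hx : x ∈ K) (ht₀ : 0 ≤ t)
    (ht₁ : t ≤ 1) :
    exp (-(g x + ℓ * (t * diam K))) * t ^ finrank ℝ E ≤ ∫ y, exp (-g y) ∂μ[|K] := by
  set S := homothety x t '' K
  have hS : MeasurableSet S := (hKc.image (homothety_continuous x t)).measurableSet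
  have hint : Integrable (fun y ↦ exp (-g y)) μ[|K] :=
    hg.continuous.neg.rexp.continuousOn.integrable_cond hKc h₀
  have hgS : ∀ y ∈ S, g y ≤ g x + ℓ * (t * diam K) := by
    rintro _ ⟨y, hy, rfl⟩
    have hdist : dist (homothety x t y) x ≤ t * diam K := by
      rw [dist_homothety_center, Real.norm_of_nonneg ht₀, dist_comm]
      exact mul_le_mul_of_nonneg_left (dist_le_diam_of_mem hKc.isBounded hy hx) ht₀
    have hlip := hg.dist_le_mul (homothety x t y) x
    rw [Real.dist_eq] at hlip
    nlinarith [le_abs_self (g (homothety x t y) - g x), ℓ.coe_nonneg]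
  calc exp (-(g x + ℓ * (t * diam K))) * t ^ finrank ℝ E
      = ∫ y in S, exp (-(g x + ℓ * (t * diam K))) ∂μ[|K] := by
        rw [setIntegral_const, measureReal_cond_image_homothety μ hK hKc.measurableSet h₀
          hKc.measure_lt_top.ne hx ht₀ ht₁, smul_eq_mul, mul_comm]
    _ ≤ ∫ y in S, exp (-g y) ∂μ[|K] :=
        setIntegral_mono_on (integrableOn_const (by simp)) hint.integrableOn hS
          fun y hy ↦ exp_le_exp.2 (neg_le_neg (hgS y hy))
    _ ≤ ∫ y, exp (-g y) ∂μ[|K] :=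
        setIntegral_le_integral hint (ae_of_all _ fun y ↦ (exp_pos _).le)

lemma neg_log_integral_exp_neg_cond_le (hKc : IsCompact K) (hK : Convex ℝ K) (h₀ : μ K ≠ 0)
    {g : E → ℝ} {ℓ : ℝ≥0} (hg : LipschitzWith ℓ g) (hx : x ∈ K) (ht₀ : 0 < t) (ht₁ : t ≤ 1) :
    -log (∫ y, exp (-g y) ∂μ[|K]) ≤ g x + ℓ * (t * diam K) - finrank ℝ E * log t := by
  have h := log_le_log (by positivity)
    (exp_neg_mul_pow_le_integral_exp_neg_cond μ hKc hK h₀ hg hx ht₀.le ht₁)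
  rw [log_mul (exp_ne_zero _) (by positivity), log_exp, log_pow] at h
  linarith

end Homothety

lemma one_le_max_mul {r D : ℝ} (hr : 0 < r) (hrD : 2 * r ≤ D) (c : ℝ) :
    1 ≤ max (2 / r) c * D := calc
  1 ≤ 2 / r * (2 * r) := by field_simp; norm_num
  _ ≤ max (2 / r) c * D := mul_le_mul (le_max_left _ _) hrD (by positivity) (by positivity)

lemma div_max_le_log_two {r D ℓ : ℝ} (hr : 0 < r) (hℓ : 0 ≤ ℓ) :
    ℓ / max (2 / r) ((r + √(r ^ 2 + D ^ 2)) * ℓ / (r * log 2)) ≤ log 2 := by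
  have hlog2 : 0 < log 2 := log_pos one_lt_two
  rw [div_le_iff₀ (lt_max_of_lt_left (by positivity))]
  calc ℓ ≤ (r + √(r ^ 2 + D ^ 2)) * ℓ / r := by
        rw [le_div_iff₀ hr]; nlinarith [sqrt_nonneg (r ^ 2 + D ^ 2)]
    _ = log 2 * ((r + √(r ^ 2 + D ^ 2)) * ℓ / (r * log 2)) := by field_simp
    _ ≤ _ := mul_le_mul_of_nonneg_left (le_max_right _ _) hlog2.le

theorem stmt8_general (n : ℕ) (hn : 1 ≤ n) (K : Set (EuclideanSpace ℝ (Fin n)))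
    (hKcomp : IsCompact K) (hKconv : Convex ℝ K)
    (r D : ℝ) (hr : 0 < r) (hball : Metric.closedBall (0 : EuclideanSpace ℝ (Fin n)) r ⊆ K)
    (hdiam : Metric.diam K ≤ D)
    (ℓ : NNReal) (g : EuclideanSpace ℝ (Fin n) → ℝ)
    (hg : LipschitzWith ℓ g) :
    let πg : Measure (EuclideanSpace ℝ (Fin n)) :=
      (∫⁻ x in K, ENNReal.ofReal (Real.exp (-g x)))⁻¹ •
        ((volume.restrict K).withDensity fun x => ENNReal.ofReal (Real.exp (-g x)))
    let π0 : Measure (EuclideanSpace ℝ (Fin n)) := (volume K)⁻¹ • volume.restrict K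
    let KL : ℝ := ∫ x, Real.log ((πg.rnDeriv π0 x).toReal) ∂πg
    0 ≤ KL ∧
    KL ≤ sInf (g '' K) - (∫ x, g x ∂πg) +
      n * Real.log (max (2 / r) ((r + Real.sqrt (r ^ 2 + D ^ 2)) * ℓ / (r * Real.log 2))) +
      Real.log (2 * D ^ n) := by
  intro πg π0 KL
  have hK₀ : volume K ≠ 0 := fun h ↦
    (measure_closedBall_pos volume 0 hr).ne' (measure_mono_null hball h)
  have hK : volume K ≠ ∞ := hKcomp.measure_lt_top.ne
  have hπg : πg = π0.tilted fun x ↦ -g x := (tilted_cond hK₀ hK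
    (hg.continuous.neg.rexp.continuousOn.integrableOn_compact hKcomp)).symm
  have : IsProbabilityMeasure π0 := cond_isProbabilityMeasure_of_finite hK₀ hK
  have : IsProbabilityMeasure πg := hπg ▸ isProbabilityMeasure_tilted
    (hg.continuous.neg.rexp.continuousOn.integrable_cond hKcomp hK₀)
  have hKL : KL = -∫ x, g x ∂πg - log (∫ x, exp (-g x) ∂π0) := by
    change ∫ x, llr πg π0 x ∂πg = _
    rw [hπg]
    exact integral_llr_tilted_cond_neg hKcomp hK₀ hg.continuous
  refine ⟨integral_llr_nonneg (hπg ▸ tilted_absolutelyContinuous π0 _), ?_⟩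
  obtain ⟨x₀, hx₀, hgx₀⟩ := (hKcomp.image hg.continuous).sInf_mem
    ⟨_, Set.mem_image_of_mem g (hball (mem_closedBall_self hr.le))⟩
  have : Nonempty (Fin n) := ⟨⟨0, hn⟩⟩
  have hrD : 2 * r ≤ D :=
    (diam_closedBall_eq 0 hr.le).symm.le.trans ((diam_mono hball hKcomp.isBounded).trans hdiam)
  set M := max (2 / r) ((r + √(r ^ 2 + D ^ 2)) * ℓ / (r * log 2))
  have hM : 0 < M := lt_max_of_lt_left (by positivity)
  have hD : 0 < D := by linarith
  have hbound : -log (∫ x, exp (-g x) ∂π0) ≤ _ :=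
    neg_log_integral_exp_neg_cond_le volume hKcomp hKconv hK₀ hg hx₀ (t := (M * D)⁻¹)
      (by positivity) (inv_le_one_of_one_le₀ (one_le_max_mul hr hrD _))
  have hℓ : ℓ * ((M * D)⁻¹ * diam K) ≤ log 2 := calc
    ℓ * ((M * D)⁻¹ * diam K) ≤ ℓ * ((M * D)⁻¹ * D) := by gcongr
    _ = ℓ / M := by field_simp
    _ ≤ log 2 := div_max_le_log_two hr ℓ.coe_nonneg
  rw [finrank_euclideanSpace_fin, log_inv, log_mul hM.ne' hD.ne'] at hbound
  rw [log_mul two_ne_zero (by positivity), log_pow, ← hgx₀]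
  linarith

/-- **KL divergence of a Gibbs measure from the uniform measure.**
Let `K ⊆ ℝⁿ` be compact convex, containing the closed ball of radius `r > 0` about the
origin, of diameter at most `D`, and let `g` be `ℓ`-Lipschitz (`ℓ > 0`).  Let `π_g` be the
probability measure on `K` with density proportional to `e^{-g}` and `π_0` the uniform
probability measure on `K`.  Then, with `KL(π_g‖π_0) = ∫ log (dπ_g/dπ_0) dπ_g`,
`0 ≤ KL(π_g‖π_0) ≤ min_{x∈K} g(x) - ∫ g dπ_g
  + n log (max (2/r) ((r+√(r²+D²))ℓ/(r log 2))) + log (2Dⁿ)`. -/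
theorem stmt8 (n : ℕ) (hn : 1 ≤ n) (K : Set (EuclideanSpace ℝ (Fin n)))
    (hKcomp : IsCompact K) (hKconv : Convex ℝ K)
    (r D : ℝ) (hr : 0 < r) (hball : Metric.closedBall (0 : EuclideanSpace ℝ (Fin n)) r ⊆ K)
    (hdiam : Metric.diam K ≤ D)
    (ℓ : NNReal) (hℓ : 0 < ℓ) (g : EuclideanSpace ℝ (Fin n) → ℝ)
    (hg : LipschitzWith ℓ g) :
    let πg : Measure (EuclideanSpace ℝ (Fin n)) :=
      (∫⁻ x in K, ENNReal.ofReal (Real.exp (-g x)))⁻¹ •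
        ((volume.restrict K).withDensity fun x => ENNReal.ofReal (Real.exp (-g x)))
    let π0 : Measure (EuclideanSpace ℝ (Fin n)) := (volume K)⁻¹ • volume.restrict K
    let KL : ℝ := ∫ x, Real.log ((πg.rnDeriv π0 x).toReal) ∂πg
    0 ≤ KL ∧
    KL ≤ sInf (g '' K) - (∫ x, g x ∂πg) +
      n * Real.log (max (2 / r) ((r + Real.sqrt (r ^ 2 + D ^ 2)) * ℓ / (r * Real.log 2))) +
      Real.log (2 * D ^ n) :=
  stmt8_general n hn K hKcomp hKconv r D hr hball hdiam ℓ g hg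
end

section
/- Let n ≥ 1 and let K ⊆ ℝⁿ be a compact convex set that contains the closed Euclidean ball of radius r > 0 centered at the origin and has diameter at most D. Then for every x* ∈ K and every ε > 0, the set K ∩ B̄(x*, ε) contains a closed Euclidean ball of radius min{ r/2 , r·ε/(r + √(r² + D²)) }, where B̄(x*, ε) is the closed ball of radius ε centered at x*. -/
/-! The ball of radius `t r` about `(1 - t) x*` is the image of `B̄(0, r)` under the homothety
with centre `x*` and ratio `t`, so it lies in `K` by convexity, and it lies in
`B̄(x*, t (r + ‖x*‖))`. As `‖x*‖ ≤ D ≤ √(r² + D²)`, the ratio `t = ρ / r`, with `ρ` the claimed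
radius, makes the latter radius at most `ε`. -/

open Metric Pointwise

section Homothety

variable {E : Type*} [NormedAddCommGroup E] [NormedSpace ℝ E]

theorem Convex.closedBall_homothety_subset {K : Set E} (hK : Convex ℝ K) {r t : ℝ}
    (hr : 0 ≤ r) (ht₀ : 0 ≤ t) (ht₁ : t ≤ 1) (hball : closedBall 0 r ⊆ K) {x : E}
    (hx : x ∈ K) : closedBall ((1 - t) • x) (t * r) ⊆ K := by
  intro y hy
  have hy' : y - (1 - t) • x ∈ t • closedBall (0 : E) r := by
    rwa [smul_closedBall t 0 hr, smul_zero, Real.norm_of_nonneg ht₀, mem_closedBall_zero_iff,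
      ← dist_eq_norm]
  obtain ⟨z, hz, hzy : t • z = y - (1 - t) • x⟩ := hy'
  have hyz : y = (1 - t) • x + t • z := by rw [hzy]; abel
  exact hyz ▸ hK hx (hball hz) (by linarith) ht₀ (by ring)

theorem closedBall_homothety_subset_closedBall {r t : ℝ} (ht₀ : 0 ≤ t) (x : E) :
    closedBall ((1 - t) • x) (t * r) ⊆ closedBall x (t * (r + ‖x‖)) := by
  refine closedBall_subset_closedBall' (le_of_eq ?_)
  rw [dist_eq_norm, sub_smul, one_smul, sub_sub_cancel_left, norm_neg, norm_smul,
    Real.norm_of_nonneg ht₀, mul_add]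

end Homothety

theorem stmt9_general (n : ℕ) (K : Set (EuclideanSpace ℝ (Fin n)))
    (hKcomp : IsCompact K) (hKconv : Convex ℝ K)
    (r D : ℝ) (hr : 0 < r) (hball : Metric.closedBall (0 : EuclideanSpace ℝ (Fin n)) r ⊆ K)
    (hdiam : Metric.diam K ≤ D)
    (xstar : EuclideanSpace ℝ (Fin n)) (hx : xstar ∈ K) (ε : ℝ) (hε : 0 < ε) :
    ∃ c : EuclideanSpace ℝ (Fin n),
      Metric.closedBall c (min (r / 2) (r * ε / (r + Real.sqrt (r ^ 2 + D ^ 2)))) ⊆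
        K ∩ Metric.closedBall xstar ε := by
  have hxD : ‖xstar‖ ≤ D := by
    have h0K : (0 : EuclideanSpace ℝ (Fin n)) ∈ K := hball (mem_closedBall_self hr.le)
    simpa using (dist_le_diam_of_mem hKcomp.isBounded hx h0K).trans hdiam
  set s := r + Real.sqrt (r ^ 2 + D ^ 2)
  have hrs : r + ‖xstar‖ ≤ s := by
    have hD : D ≤ Real.sqrt (r ^ 2 + D ^ 2) := Real.le_sqrt_of_sq_le (by nlinarith)
    linarith
  set ρ := min (r / 2) (r * ε / s)
  have hρ₀ : 0 ≤ ρ := le_min (by positivity) (by positivity)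
  set t := ρ / r
  have htr : t * r = ρ := div_mul_cancel₀ ρ hr.ne'
  have ht₁ : t ≤ 1 := (div_le_one hr).2 ((min_le_left _ _).trans (by linarith))
  have hs : 0 < s := by positivity
  have htε : t * (r + ‖xstar‖) ≤ ε := calc
    t * (r + ‖xstar‖) ≤ r * ε / s / r * s := by
      gcongr ?_ / r * ?_
      exact min_le_right _ _
    _ = ε := by field_simp
  refine ⟨(1 - t) • xstar, htr ▸ Set.subset_inter ?_ ?_⟩
  · exact hKconv.closedBall_homothety_subset hr.le (by positivity) ht₁ hball hx
  · exact (closedBall_homothety_subset_closedBall (by positivity) xstar).trans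
      (closedBall_subset_closedBall htε)

/-- **Inscribed ball in the intersection of `K` with a ball.**
Let `K ⊆ ℝⁿ` be compact convex, containing the closed ball of radius `r > 0` about the
origin and of diameter at most `D`.  Then for every `x* ∈ K` and `ε > 0`, the set
`K ∩ B̄(x*, ε)` contains a closed ball of radius `min (r/2) (rε/(r + √(r² + D²)))`. -/
theorem stmt9 (n : ℕ) (hn : 1 ≤ n) (K : Set (EuclideanSpace ℝ (Fin n)))
    (hKcomp : IsCompact K) (hKconv : Convex ℝ K)
    (r D : ℝ) (hr : 0 < r) (hball : Metric.closedBall (0 : EuclideanSpace ℝ (Fin n)) r ⊆ K)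
    (hdiam : Metric.diam K ≤ D)
    (xstar : EuclideanSpace ℝ (Fin n)) (hx : xstar ∈ K) (ε : ℝ) (hε : 0 < ε) :
    ∃ c : EuclideanSpace ℝ (Fin n),
      Metric.closedBall c (min (r / 2) (r * ε / (r + Real.sqrt (r ^ 2 + D ^ 2)))) ⊆
        K ∩ Metric.closedBall xstar ε :=
  stmt9_general n K hKcomp hKconv r D hr hball hdiam xstar hx ε hε
end

section
/- Let n ≥ 1, let K ⊆ ℝⁿ be a compact convex set that contains the closed Euclidean ball of radius r > 0 centered at the origin and has diameter at most D, let f̄ : ℝⁿ → ℝ be u-Lipschitz with u > 0, and let β > 0. Let π_{βf̄} be the probability measure on K with density proportional to e^{−β·f̄(x)}. Then ∫ f̄ dπ_{βf̄} ≤ min_{x∈K} f̄(x) + (n/β)·log( 2D· max{ 2/r , (r+√(r²+D²))·u·β/(r·log 2) } ). -/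
/-!
The Gibbs variational inequality (nonnegativity of the relative entropy of `π_{βf̄}` with respect
to the uniform distribution on `K`) bounds the mean energy `β ∫ f̄ dπ_{βf̄}` by `log (vol K / Z)`,
where `Z = ∫_K e^{-βf̄}`. To bound `Z` from below, shrink `K` towards a minimiser `x₀` of `f̄`: by
convexity the ball of radius `ρ` centred at `(1 - ρ/r) x₀` lies in `K`, and on it `f̄` exceeds
`f̄ x₀` by at most `u ρ (1 + D/r)`. Hence `Z ≥ e^{-β (f̄ x₀ + u ρ (1 + D/r))} vol(B)` with
`vol K / vol B ≤ (D/ρ)^n`, and the choice `ρ = 1 / max (…)` makes the energy excess at most `log 2`.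
-/

open MeasureTheory Metric Real Module
open scoped Pointwise

section Gibbs

variable {α : Type*} [MeasurableSpace α] {μ : Measure α} {φ : α → ℝ}

noncomputable def gibbsMeasure (μ : Measure α) (φ : α → ℝ) : Measure α :=
  (∫⁻ x, ENNReal.ofReal (exp (-φ x)) ∂μ)⁻¹ • μ.withDensity fun x => ENNReal.ofReal (exp (-φ x))

theorem integral_gibbsMeasure (hφ : AEMeasurable φ μ) (hint : Integrable (fun x => exp (-φ x)) μ)
    (h : α → ℝ) :
    ∫ x, h x ∂gibbsMeasure μ φ = (∫ x, exp (-φ x) * h x ∂μ) / ∫ x, exp (-φ x) ∂μ := by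
  have hnonneg : 0 ≤ᵐ[μ] fun x => exp (-φ x) := ae_of_all _ fun x => (exp_pos _).le
  rw [gibbsMeasure, integral_smul_measure, ← ofReal_integral_eq_lintegral_ofReal hint hnonneg,
    integral_withDensity_eq_integral_toReal_smul₀ (by fun_prop)
      (ae_of_all _ fun _ => ENNReal.ofReal_lt_top)]
  simp [ENNReal.toReal_inv, ENNReal.toReal_ofReal (integral_nonneg_of_ae hnonneg),
    ENNReal.toReal_ofReal (exp_pos _).le, div_eq_inv_mul]

/-- `u + 1 ≤ eᵘ` at `u = x - log c`, times `e⁻ˣ`: the pointwise form of the Gibbs variational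
inequality. -/
theorem Real.mul_exp_neg_le (x : ℝ) {c : ℝ} (hc : 0 < c) :
    x * exp (-x) ≤ exp (-x) * log c + (c⁻¹ - exp (-x)) := by
  have h := mul_le_mul_of_nonneg_left (add_one_le_exp (x - log c)) (exp_pos (-x)).le
  rw [exp_sub, exp_log hc, ← mul_div_assoc, ← exp_add, neg_add_cancel, exp_zero] at h
  linarith [one_div c]

theorem integral_gibbsMeasure_le_log [IsFiniteMeasure μ] (hφ : AEMeasurable φ μ)
    (hφint : Integrable (fun x => φ x * exp (-φ x)) μ) (hint : Integrable (fun x => exp (-φ x)) μ)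
    (hZ : 0 < ∫ x, exp (-φ x) ∂μ) :
    ∫ x, φ x ∂gibbsMeasure μ φ ≤ log (μ.real Set.univ / ∫ x, exp (-φ x) ∂μ) := by
  set Z := ∫ x, exp (-φ x) ∂μ
  set c := μ.real Set.univ / Z
  have : NeZero μ := ⟨by rintro rfl; simp [Z] at hZ⟩
  have hc : 0 < c := div_pos measureReal_univ_pos hZ
  have hsub : Integrable (fun x => c⁻¹ - exp (-φ x)) μ := (integrable_const _).sub hint
  rw [integral_gibbsMeasure hφ hint, div_le_iff₀ hZ]
  calc ∫ x, exp (-φ x) * φ x ∂μ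
      ≤ ∫ x, exp (-φ x) * log c + (c⁻¹ - exp (-φ x)) ∂μ :=
        integral_mono (by simpa only [mul_comm] using hφint) ((hint.mul_const _).add hsub)
          fun x => by simpa only [mul_comm] using mul_exp_neg_le (φ x) hc
    _ = log c * Z := by
        rw [integral_add (hint.mul_const _) hsub, integral_mul_const,
          integral_sub (integrable_const _) hint, integral_const, smul_eq_mul, inv_div,
          mul_div_cancel₀ _ measureReal_univ_pos.ne']
        ring

theorem integral_gibbsMeasure_le_add_log [IsFiniteMeasure μ] (hφ : AEMeasurable φ μ)
    (hφint : Integrable (fun x => φ x * exp (-φ x)) μ) (hint : Integrable (fun x => exp (-φ x)) μ)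
    {B : Set α} (hB : MeasurableSet B) (hμB : 0 < μ.real B) {a : ℝ} (hφB : ∀ x ∈ B, φ x ≤ a) :
    ∫ x, φ x ∂gibbsMeasure μ φ ≤ a + log (μ.real Set.univ / μ.real B) := by
  have hZ : μ.real B * exp (-a) ≤ ∫ x, exp (-φ x) ∂μ := calc
    μ.real B * exp (-a) ≤ ∫ x in B, exp (-φ x) ∂μ := by
      rw [mul_comm]
      exact setIntegral_ge_of_const_le_real hB (measure_ne_top _ _)
        (fun x hx => exp_le_exp.2 (neg_le_neg (hφB x hx))) hint.integrableOn
    _ ≤ ∫ x, exp (-φ x) ∂μ := setIntegral_le_integral hint (ae_of_all _ fun x => (exp_pos _).le)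
  have hV : 0 < μ.real Set.univ := hμB.trans_le (measureReal_mono (Set.subset_univ B))
  have hZpos : 0 < ∫ x, exp (-φ x) ∂μ := (mul_pos hμB (exp_pos _)).trans_le hZ
  calc ∫ x, φ x ∂gibbsMeasure μ φ
      ≤ log (μ.real Set.univ / ∫ x, exp (-φ x) ∂μ) :=
        integral_gibbsMeasure_le_log hφ hφint hint hZpos
    _ ≤ log (μ.real Set.univ / (μ.real B * exp (-a))) :=
        log_le_log (div_pos hV hZpos) (div_le_div_of_nonneg_left hV.le (by positivity) hZ)
    _ = a + log (μ.real Set.univ / μ.real B) := by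
        rw [exp_neg, ← div_div, div_inv_eq_mul, log_mul (by positivity) (exp_pos a).ne', log_exp,
          add_comm]

end Gibbs

section NormedSpace

variable {E : Type*} [NormedAddCommGroup E] [NormedSpace ℝ E]

theorem Convex.closedBall_combo_subset {K : Set E} (hK : Convex ℝ K) {x c : E} {r t : ℝ}
    (hx : x ∈ K) (hr : 0 ≤ r) (hc : closedBall c r ⊆ K) (ht0 : 0 ≤ t) (ht1 : t ≤ 1) :
    closedBall ((1 - t) • x + t • c) (t * r) ⊆ K :=
  calc closedBall ((1 - t) • x + t • c) (t * r) = (1 - t) • {x} + t • closedBall c r := by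
        rw [smul_closedBall _ _ hr, Set.smul_set_singleton, singleton_add_closedBall,
          Real.norm_of_nonneg ht0]
    _ ⊆ (1 - t) • K + t • K := by gcongr; exact Set.singleton_subset_iff.2 hx
    _ ⊆ K := hK.set_combo_subset (by linarith) ht0 (by ring)

theorem dist_le_of_mem_closedBall_smul {x y : E} {t ρ : ℝ} (ht : 0 ≤ t)
    (hy : y ∈ closedBall ((1 - t) • x) ρ) : dist y x ≤ ρ + t * ‖x‖ :=
  calc dist y x ≤ dist y ((1 - t) • x) + dist ((1 - t) • x) x := dist_triangle _ _ _
    _ ≤ ρ + t * ‖x‖ := by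
        gcongr
        · exact mem_closedBall.1 hy
        · rw [dist_eq_norm, sub_smul, one_smul, sub_sub_cancel_left, norm_neg, norm_smul,
            Real.norm_of_nonneg ht]

variable [MeasurableSpace E] [BorelSpace E] [FiniteDimensional ℝ E] (μ : Measure E)
  [μ.IsAddHaarMeasure]

theorem addHaar_real_div_closedBall_le {s : Set E} {x y : E} {R ρ : ℝ}
    (hs : s ⊆ closedBall x R) (hR : 0 ≤ R) (hρ : 0 < ρ) :
    μ.real s / μ.real (closedBall y ρ) ≤ (R / ρ) ^ finrank ℝ E := by
  have hball : 0 < μ.real (ball (0 : E) 1) :=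
    ENNReal.toReal_pos (measure_ball_pos μ _ one_pos).ne' measure_ball_lt_top.ne
  rw [div_le_iff₀ (by rw [Measure.addHaar_real_closedBall μ y hρ.le]; positivity),
    Measure.addHaar_real_closedBall μ y hρ.le, div_pow, div_mul_eq_mul_div, mul_div_assoc,
    mul_div_cancel_left₀ _ (by positivity), ← Measure.addHaar_real_closedBall μ x hR]
  exact measureReal_mono hs measure_closedBall_lt_top.ne

theorem integral_gibbsMeasure_restrict_le {K : Set E} (hKc : IsCompact K) (hKconv : Convex ℝ K)
    {r R : ℝ} (hr : 0 < r) (hrK : closedBall 0 r ⊆ K) (hKR : K ⊆ closedBall 0 R)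
    {f : E → ℝ} {u : NNReal} (hf : LipschitzWith u f) {β : ℝ} (hβ : 0 ≤ β) {x : E} (hx : x ∈ K)
    {ρ : ℝ} (hρ : 0 < ρ) (hρr : ρ ≤ r) :
    β * ∫ y, f y ∂gibbsMeasure (μ.restrict K) (fun y => β * f y) ≤
      β * f x + β * (u * ρ * (1 + R / r)) + finrank ℝ E * log (R / ρ) := by
  set t := ρ / r
  set B := closedBall ((1 - t) • x) ρ
  have hBK : B ⊆ K := by
    simpa [t, div_mul_cancel₀ ρ hr.ne'] using
      hKconv.closedBall_combo_subset hx hr.le hrK (by positivity) (div_le_one_of_le₀ hρr hr.le)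
  have hxR : ‖x‖ ≤ R := mem_closedBall_zero_iff.1 (hKR hx)
  have hfB : ∀ y ∈ B, β * f y ≤ β * f x + β * (u * ρ * (1 + R / r)) := fun y hy => by
    have hdist : dist y x ≤ ρ * (1 + R / r) := calc
      dist y x ≤ ρ + t * ‖x‖ := dist_le_of_mem_closedBall_smul (by positivity) hy
      _ ≤ ρ + t * R := by gcongr
      _ = ρ * (1 + R / r) := by ring
    rw [← mul_add]
    gcongr
    exact (hf.le_add_mul y x).trans (by rw [mul_assoc]; gcongr)
  have hBpos : 0 < μ.real B :=
    ENNReal.toReal_pos (measure_closedBall_pos μ _ hρ).ne' measure_closedBall_lt_top.ne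
  have := isFiniteMeasure_restrict.2 (hKc.measure_lt_top (μ := μ)).ne
  have hcont : Continuous fun y => β * f y := continuous_const.mul hf.continuous
  have hgibbs := integral_gibbsMeasure_le_add_log hcont.aemeasurable
    ((hcont.mul hcont.neg.rexp).continuousOn.integrableOn_compact hKc)
    (hcont.neg.rexp.continuousOn.integrableOn_compact hKc) measurableSet_closedBall
    (by rwa [measureReal_restrict_apply measurableSet_closedBall, Set.inter_eq_left.2 hBK]) hfB
  rw [measureReal_restrict_apply_univ, measureReal_restrict_apply measurableSet_closedBall,
    Set.inter_eq_left.2 hBK, integral_const_mul] at hgibbs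
  have hratio : 0 < μ.real K / μ.real B :=
    div_pos (hBpos.trans_le (measureReal_mono hBK hKc.measure_lt_top.ne)) hBpos
  have hlog : log (μ.real K / μ.real B) ≤ finrank ℝ E * log (R / ρ) := by
    rw [← log_pow]
    exact log_le_log hratio
      (addHaar_real_div_closedBall_le μ hKR ((norm_nonneg x).trans hxR) hρ)
  linarith

end NormedSpace

theorem stmt10_general (n : ℕ) (hn : 1 ≤ n) (K : Set (EuclideanSpace ℝ (Fin n)))
    (hKcomp : IsCompact K) (hKconv : Convex ℝ K)
    (r D : ℝ) (hr : 0 < r) (hball : Metric.closedBall (0 : EuclideanSpace ℝ (Fin n)) r ⊆ K)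
    (hdiam : Metric.diam K ≤ D)
    (u : NNReal) (f : EuclideanSpace ℝ (Fin n) → ℝ)
    (hf : LipschitzWith u f) (β : ℝ) (hβ : 0 < β) :
    let πβf : Measure (EuclideanSpace ℝ (Fin n)) :=
      (∫⁻ x in K, ENNReal.ofReal (Real.exp (-(β * f x))))⁻¹ •
        ((volume.restrict K).withDensity fun x => ENNReal.ofReal (Real.exp (-(β * f x))))
    (∫ x, f x ∂πβf) ≤ sInf (f '' K) +
      n / β * Real.log (2 * D *
        max (2 / r) ((r + Real.sqrt (r ^ 2 + D ^ 2)) * u * β / (r * Real.log 2))) := by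
  intro πβf
  have h0K : (0 : EuclideanSpace ℝ (Fin n)) ∈ K := hball (mem_closedBall_self hr.le)
  have hKD : K ⊆ closedBall 0 D := fun x hx =>
    mem_closedBall.2 ((dist_le_diam_of_mem hKcomp.isBounded hx h0K).trans hdiam)
  have hD : 2 * r ≤ D := by
    have : Nontrivial (EuclideanSpace ℝ (Fin n)) :=
      nontrivial_of_finrank_pos (R := ℝ) (by rw [finrank_euclideanSpace_fin]; omega)
    simpa [diam_closedBall_eq _ hr.le] using (diam_mono hball hKcomp.isBounded).trans hdiam
  obtain ⟨x₀, hx₀K, hx₀⟩ := hKcomp.exists_isMinOn ⟨0, h0K⟩ hf.continuous.continuousOn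
  have hmin : sInf (f '' K) = f x₀ :=
    IsLeast.csInf_eq ⟨Set.mem_image_of_mem f hx₀K, by rintro _ ⟨y, hy, rfl⟩; exact hx₀ hy⟩
  set M := max (2 / r) ((r + √(r ^ 2 + D ^ 2)) * u * β / (r * log 2))
  have hrM : 2 ≤ r * M := (div_le_iff₀' hr).1 (le_max_left _ _)
  have hM : 0 < M := lt_max_of_lt_left (by positivity)
  have hexcess : β * (u * M⁻¹ * (1 + D / r)) ≤ log 2 := by
    have h := le_max_right (2 / r) ((r + √(r ^ 2 + D ^ 2)) * u * β / (r * log 2))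
    rw [div_le_iff₀ (by positivity)] at h
    have hDS : D ≤ √(r ^ 2 + D ^ 2) := (le_abs_self D).trans (abs_le_sqrt (by nlinarith))
    calc β * (u * M⁻¹ * (1 + D / r)) = (r + D) * u * β / (r * M) := by field_simp
      _ ≤ (r + √(r ^ 2 + D ^ 2)) * u * β / (r * M) := by gcongr
      _ ≤ log 2 := by rw [div_le_iff₀ (by positivity)]; linarith
  have hgibbs := integral_gibbsMeasure_restrict_le volume hKcomp hKconv hr hball hKD hf hβ.le hx₀K
    (inv_pos.2 hM) ((inv_le_iff_one_le_mul₀ hM).2 (by linarith))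
  rw [finrank_euclideanSpace_fin, div_inv_eq_mul] at hgibbs
  change β * ∫ x, f x ∂πβf ≤ _ at hgibbs
  have hlog2 : log 2 ≤ n * log 2 :=
    le_mul_of_one_le_left (log_nonneg one_le_two) (by exact_mod_cast hn)
  rw [hmin, div_mul_eq_mul_div, ← sub_le_iff_le_add', le_div_iff₀ hβ, mul_assoc,
    log_mul two_ne_zero (mul_pos (by linarith) hM).ne']
  linarith

/-- **Near-optimality of the constrained Gibbs distribution.**
Let `K ⊆ ℝⁿ` be compact convex, containing the closed ball of radius `r > 0` about the
origin and of diameter at most `D`, let `f̄` be `u`-Lipschitz (`u > 0`), and let `β > 0`.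
Let `π_{βf̄}` be the probability measure on `K` with density proportional to `e^{-β f̄}`.
Then `∫ f̄ dπ_{βf̄} ≤ min_{x∈K} f̄(x)
  + (n/β) log (2D max (2/r) ((r+√(r²+D²)) u β/(r log 2)))`. -/
theorem stmt10 (n : ℕ) (hn : 1 ≤ n) (K : Set (EuclideanSpace ℝ (Fin n)))
    (hKcomp : IsCompact K) (hKconv : Convex ℝ K)
    (r D : ℝ) (hr : 0 < r) (hball : Metric.closedBall (0 : EuclideanSpace ℝ (Fin n)) r ⊆ K)
    (hdiam : Metric.diam K ≤ D)
    (u : NNReal) (hu : 0 < u) (f : EuclideanSpace ℝ (Fin n) → ℝ)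
    (hf : LipschitzWith u f) (β : ℝ) (hβ : 0 < β) :
    let πβf : Measure (EuclideanSpace ℝ (Fin n)) :=
      (∫⁻ x in K, ENNReal.ofReal (Real.exp (-(β * f x))))⁻¹ •
        ((volume.restrict K).withDensity fun x => ENNReal.ofReal (Real.exp (-(β * f x))))
    (∫ x, f x ∂πβf) ≤ sInf (f '' K) +
      n / β * Real.log (2 * D *
        max (2 / r) ((r + Real.sqrt (r ^ 2 + D ^ 2)) * u * β / (r * Real.log 2))) :=
  stmt10_general n hn K hKcomp hKconv r D hr hball hdiam u f hf β hβ
end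

section
/- Let n ≥ 1, let K' ⊆ K be nonempty closed convex subsets of ℝⁿ, and let δ > 0 be such that every point of K lies within Euclidean distance δ of K'. Let x ∈ ℝⁿ and R > 0 satisfy ‖x − Π_K(x)‖ ≤ R. Then ‖Π_K(x) − Π_{K'}(x)‖ ≤ δ + √(δ² + 2δR). -/
open scoped RealInnerProductSpace

/-!
If `p` is the nearest point of the convex set `K` to `x`, then for every `p' ∈ K` the angle at `p`
between `x` and `p'` is obtuse, so `‖x - p‖² + ‖p - p'‖² ≤ ‖x - p'‖²`. For `p'` the nearest point
of `K' ⊆ K`, comparing with a point of `K'` within `δ` of `p` gives `‖x - p'‖ ≤ ‖x - p‖ + δ`, hence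
`‖p - p'‖² ≤ δ² + 2δ‖x - p‖`.
-/

section NearestPoint

variable {F : Type*} [NormedAddCommGroup F] [InnerProductSpace ℝ F]

theorem real_inner_sub_le_zero_of_isMinOn {K : Set F} (hK : Convex ℝ K) {x p : F} (hp : p ∈ K)
    (hmin : IsMinOn (fun z => ‖x - z‖) K p) : ∀ w ∈ K, ⟪x - p, w - p⟫ ≤ 0 :=
  (norm_eq_iInf_iff_real_inner_le_zero hK hp).mp (hmin.iInf_eq hp).symm

theorem norm_sub_sq_add_norm_sub_sq_le_of_isMinOn {K : Set F} (hK : Convex ℝ K) {x p q : F}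
    (hp : p ∈ K) (hmin : IsMinOn (fun z => ‖x - z‖) K p) (hq : q ∈ K) :
    ‖x - p‖ ^ 2 + ‖p - q‖ ^ 2 ≤ ‖x - q‖ ^ 2 := by
  have hobtuse := real_inner_sub_le_zero_of_isMinOn hK hp hmin q hq
  have hexpand : ‖x - q‖ ^ 2 = ‖x - p‖ ^ 2 - 2 * ⟪x - p, q - p⟫ + ‖q - p‖ ^ 2 := by
    rw [← norm_sub_sq_real, sub_sub_sub_cancel_right]
  rw [hexpand, norm_sub_rev p q]
  linarith

end NearestPoint

theorem norm_sub_le_of_isMinOn_of_norm_sub_le {E : Type*} [SeminormedAddCommGroup E] {K : Set E}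
    {x p p' q : E} (hmin : IsMinOn (fun z => ‖x - z‖) K p') (hq : q ∈ K) {δ : ℝ}
    (hpq : ‖p - q‖ ≤ δ) : ‖x - p'‖ ≤ ‖x - p‖ + δ :=
  calc ‖x - p'‖ ≤ ‖x - q‖ := isMinOn_iff.mp hmin q hq
    _ ≤ ‖x - p‖ + ‖p - q‖ := norm_sub_le_norm_sub_add_norm_sub x p q
    _ ≤ ‖x - p‖ + δ := by gcongr

theorem stmt11_general (n : ℕ) (K K' : Set (EuclideanSpace ℝ (Fin n)))
    (hsub : K' ⊆ K) (hKconv : Convex ℝ K)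
    (δ : ℝ) (hdist : ∀ y ∈ K, ∃ z ∈ K', ‖y - z‖ ≤ δ)
    (x p p' : EuclideanSpace ℝ (Fin n)) (R : ℝ)
    (hp : p ∈ K) (hpmin : ∀ z ∈ K, ‖x - p‖ ≤ ‖x - z‖)
    (hp' : p' ∈ K') (hp'min : ∀ z ∈ K', ‖x - p'‖ ≤ ‖x - z‖)
    (hxR : ‖x - p‖ ≤ R) :
    ‖p - p'‖ ≤ δ + Real.sqrt (δ ^ 2 + 2 * δ * R) := by
  obtain ⟨q, hq, hpq⟩ := hdist p hp
  have hδ : 0 ≤ δ := (norm_nonneg _).trans hpq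
  have hpyth := norm_sub_sq_add_norm_sub_sq_le_of_isMinOn hKconv hp (isMinOn_iff.mpr hpmin)
    (hsub hp')
  have hclose := norm_sub_le_of_isMinOn_of_norm_sub_le (isMinOn_iff.mpr hp'min) hq hpq
  have hsq : ‖p - p'‖ ^ 2 ≤ δ ^ 2 + 2 * δ * R := by
    have := pow_le_pow_left₀ (norm_nonneg _) hclose 2
    nlinarith [mul_le_mul_of_nonneg_left hxR hδ]
  calc ‖p - p'‖ ≤ Real.sqrt (δ ^ 2 + 2 * δ * R) := Real.le_sqrt_of_sq_le hsq
    _ ≤ δ + Real.sqrt (δ ^ 2 + 2 * δ * R) := le_add_of_nonneg_left hδ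

/-- **Projections onto nearby convex sets are close.**
Let `K' ⊆ K` be nonempty closed convex subsets of `ℝⁿ` such that every point of `K` lies
within distance `δ > 0` of `K'`.  If `p` is the nearest point to `x` in `K` and `p'` is the
nearest point to `x` in `K'`, and `‖x - p‖ ≤ R` with `R > 0`, then
`‖p - p'‖ ≤ δ + √(δ² + 2δR)`. -/
theorem stmt11 (n : ℕ) (hn : 1 ≤ n) (K K' : Set (EuclideanSpace ℝ (Fin n)))
    (hsub : K' ⊆ K) (hKcl : IsClosed K) (hKconv : Convex ℝ K)
    (hK'cl : IsClosed K') (hK'conv : Convex ℝ K')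
    (hKne : K.Nonempty) (hK'ne : K'.Nonempty)
    (δ : ℝ) (hδ : 0 < δ) (hdist : ∀ y ∈ K, ∃ z ∈ K', ‖y - z‖ ≤ δ)
    (x p p' : EuclideanSpace ℝ (Fin n)) (R : ℝ) (hR : 0 < R)
    (hp : p ∈ K) (hpmin : ∀ z ∈ K, ‖x - p‖ ≤ ‖x - z‖)
    (hp' : p' ∈ K') (hp'min : ∀ z ∈ K', ‖x - p'‖ ≤ ‖x - z‖)
    (hxR : ‖x - p‖ ≤ R) :
    ‖p - p'‖ ≤ δ + Real.sqrt (δ ^ 2 + 2 * δ * R) :=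
  stmt11_general n K K' hsub hKconv δ hdist x p p' R hp hpmin hp' hp'min hxR
end

section
/- Let n ≥ 1, let K ⊆ ℝⁿ be a compact convex set with nonempty interior, and let K_1 ⊆ K_2 ⊆ ⋯ ⊆ K be an increasing sequence of nonempty compact convex sets such that every compact subset of the interior of K is contained in K_i for all sufficiently large i. Then the projections Π_{K_i} converge uniformly to Π_K on compact subsets of ℝⁿ: for every R > 0 and ε > 0 there exists N such that for all i ≥ N and all x ∈ ℝⁿ with ‖x‖ ≤ R, ‖Π_{K_i}(x) − Π_K(x)‖ ≤ ε. -/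
/-!
Let `c` be an interior point of `K` and `0 < δ ≤ 1`. The shrunken copy `(1 - δ) • K + δ • c` is a
compact subset of the interior of `K`, hence lies in `K_i` for large `i`. If `p` is the nearest
point to `x` in `K`, the point `q = (1 - δ) • p + δ • c` lies in `K_i` and is `O(δ)`-close to `p`.
Since `p'` lies in the convex set `K`, the obtuse-angle property of `p` gives
`‖x - p‖² + ‖p' - p‖² ≤ ‖x - p'‖² ≤ ‖x - q‖²`, so `‖p' - p‖² = O(δ)` uniformly for `‖x‖ ≤ R`.
-/

open Filter Topology RealInnerProductSpace

section NearestPoint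

variable {F : Type*} [NormedAddCommGroup F] [InnerProductSpace ℝ F]

theorem norm_sub_sq_add_norm_sub_sq_le_of_nearest {K : Set F} (hK : Convex ℝ K) {x p y : F}
    (hp : p ∈ K) (hmin : ∀ z ∈ K, ‖x - p‖ ≤ ‖x - z‖) (hy : y ∈ K) :
    ‖x - p‖ ^ 2 + ‖y - p‖ ^ 2 ≤ ‖x - y‖ ^ 2 := by
  have : Nonempty K := ⟨⟨p, hp⟩⟩
  have hbdd : BddBelow (Set.range fun w : K => ‖x - w‖) := ⟨0, by rintro _ ⟨w, rfl⟩; positivity⟩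
  have hinf : ‖x - p‖ = ⨅ w : K, ‖x - w‖ :=
    le_antisymm (le_ciInf fun w => hmin w w.2) (ciInf_le hbdd ⟨p, hp⟩)
  have hinner : ⟪x - p, y - p⟫ ≤ 0 := (norm_eq_iInf_iff_real_inner_le_zero hK hp).1 hinf y hy
  rw [show x - y = (x - p) - (y - p) by abel, norm_sub_sq_real (x - p) (y - p)]
  linarith

theorem norm_sub_sq_le_of_nearest_of_subset {K L : Set F} (hK : Convex ℝ K) (hLK : L ⊆ K)
    {x p p' q : F} (hp : p ∈ K ∧ ∀ z ∈ K, ‖x - p‖ ≤ ‖x - z‖)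
    (hp' : p' ∈ L ∧ ∀ z ∈ L, ‖x - p'‖ ≤ ‖x - z‖) (hq : q ∈ L) :
    ‖p - p'‖ ^ 2 ≤ ‖q - p‖ * (‖x - q‖ + ‖x - p‖) := by
  have hpyth := norm_sub_sq_add_norm_sub_sq_le_of_nearest hK hp.1 hp.2 (hLK hp'.1)
  have hp'q : ‖x - p'‖ ≤ ‖x - q‖ := hp'.2 q hq
  have hdiff : ‖x - q‖ - ‖x - p‖ ≤ ‖q - p‖ := by
    simpa [norm_sub_rev q p] using norm_sub_norm_le (x - q) (x - p)
  rw [norm_sub_rev p p']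
  nlinarith [norm_nonneg (x - p'), norm_nonneg (x - p)]

end NearestPoint

theorem Convex.image_lineMap_subset_interior {E : Type*} [NormedAddCommGroup E] [NormedSpace ℝ E]
    {K : Set E} (hK : Convex ℝ K) {c : E} (hc : c ∈ interior K) {δ : ℝ} (hδ₀ : 0 < δ)
    (hδ₁ : δ ≤ 1) : (fun y => AffineMap.lineMap y c δ) '' K ⊆ interior K := by
  rintro _ ⟨y, hy, rfl⟩
  show AffineMap.lineMap y c δ ∈ interior K
  rw [AffineMap.lineMap_apply_module]
  exact hK.combo_self_interior_mem_interior hy hc (sub_nonneg.2 hδ₁) hδ₀ (by ring)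

theorem exists_pos_le_one_mul_le (C : ℝ) {η : ℝ} (hη : 0 < η) :
    ∃ δ : ℝ, 0 < δ ∧ δ ≤ 1 ∧ δ * C ≤ η := by
  have hlim : Tendsto (fun δ : ℝ => δ * C) (𝓝[>] 0) (𝓝 0) := by
    simpa using ((continuous_mul_const C).tendsto 0).mono_left nhdsWithin_le_nhds
  obtain ⟨δ, ⟨hδ₀, hδ₁⟩, hδC⟩ :=
    (Eventually.and (Ioc_mem_nhdsGT one_pos) (hlim.eventually (eventually_le_nhds hη))).exists
  exact ⟨δ, hδ₀, hδ₁, hδC⟩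

theorem stmt12_general (n : ℕ) (K : Set (EuclideanSpace ℝ (Fin n)))
    (hKcomp : IsCompact K) (hKconv : Convex ℝ K) (hKint : (interior K).Nonempty)
    (Ks : ℕ → Set (EuclideanSpace ℝ (Fin n)))
    (hsub : ∀ i, Ks i ⊆ K)
    (habsorb : ∀ S : Set (EuclideanSpace ℝ (Fin n)),
      IsCompact S → S ⊆ interior K → ∃ N, ∀ i ≥ N, S ⊆ Ks i) :
    ∀ R > (0 : ℝ), ∀ ε > (0 : ℝ), ∃ N, ∀ i ≥ N,
      ∀ x : EuclideanSpace ℝ (Fin n), ‖x‖ ≤ R →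
        ∀ p p' : EuclideanSpace ℝ (Fin n),
          (p ∈ K ∧ ∀ z ∈ K, ‖x - p‖ ≤ ‖x - z‖) →
          (p' ∈ Ks i ∧ ∀ z ∈ Ks i, ‖x - p'‖ ≤ ‖x - z‖) →
          ‖p - p'‖ ≤ ε := by
  intro R _ ε hε
  obtain ⟨c, hc⟩ := hKint
  obtain ⟨M, hM⟩ := hKcomp.isBounded.exists_norm_le
  obtain ⟨δ, hδ₀, hδ₁, hδε⟩ := exists_pos_le_one_mul_le (2 * M * (2 * (R + M))) (pow_pos hε 2)
  obtain ⟨N, hN⟩ := habsorb _ (hKcomp.image (by fun_prop))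
    (hKconv.image_lineMap_subset_interior hc hδ₀ hδ₁)
  refine ⟨N, fun i hi x hx p p' hp hp' => ?_⟩
  set q := AffineMap.lineMap p c δ
  have hqK : q ∈ Ks i := hN i hi ⟨p, hp.1, rfl⟩
  have hqp : ‖q - p‖ ≤ δ * (2 * M) := by
    rw [← dist_eq_norm, dist_lineMap_left, Real.norm_of_nonneg hδ₀.le, dist_eq_norm]
    gcongr
    linarith [norm_sub_le p c, hM p hp.1, hM c (interior_subset hc)]
  have hdist : ∀ y ∈ K, ‖x - y‖ ≤ R + M := fun y hy =>
    (norm_sub_le _ _).trans (add_le_add hx (hM y hy))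
  have hsq : ‖p - p'‖ ^ 2 ≤ ε ^ 2 :=
    calc ‖p - p'‖ ^ 2 ≤ ‖q - p‖ * (‖x - q‖ + ‖x - p‖) :=
          norm_sub_sq_le_of_nearest_of_subset hKconv (hsub i) hp hp' hqK
      _ ≤ δ * (2 * M) * (2 * (R + M)) := by
          gcongr
          · exact (norm_nonneg _).trans hqp
          · linarith [hdist q (hsub i hqK), hdist p hp.1]
      _ ≤ ε ^ 2 := by linarith
  exact (pow_le_pow_iff_left₀ (norm_nonneg _) hε.le two_ne_zero).1 hsq

/-- **Uniform convergence of projections on compacts.**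
Let `K ⊆ ℝⁿ` be compact convex with nonempty interior and `K₁ ⊆ K₂ ⊆ ⋯ ⊆ K` an increasing
family of nonempty compact convex sets such that every compact subset of the interior of
`K` is contained in `K_i` for all sufficiently large `i`.  Then the nearest-point
projections onto `K_i` converge uniformly on compacts to the projection onto `K`: for all
`R, ε > 0` there is `N` such that for all `i ≥ N` and `‖x‖ ≤ R`, if `p` is the nearest
point to `x` in `K` and `p'` the nearest point to `x` in `K_i`, then `‖p - p'‖ ≤ ε`. -/
theorem stmt12 (n : ℕ) (hn : 1 ≤ n) (K : Set (EuclideanSpace ℝ (Fin n)))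
    (hKcomp : IsCompact K) (hKconv : Convex ℝ K) (hKint : (interior K).Nonempty)
    (Ks : ℕ → Set (EuclideanSpace ℝ (Fin n)))
    (hmono : Monotone Ks) (hsub : ∀ i, Ks i ⊆ K)
    (hKscomp : ∀ i, IsCompact (Ks i)) (hKsconv : ∀ i, Convex ℝ (Ks i))
    (hKsne : ∀ i, (Ks i).Nonempty)
    (habsorb : ∀ S : Set (EuclideanSpace ℝ (Fin n)),
      IsCompact S → S ⊆ interior K → ∃ N, ∀ i ≥ N, S ⊆ Ks i) :
    ∀ R > (0 : ℝ), ∀ ε > (0 : ℝ), ∃ N, ∀ i ≥ N,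
      ∀ x : EuclideanSpace ℝ (Fin n), ‖x‖ ≤ R →
        ∀ p p' : EuclideanSpace ℝ (Fin n),
          (p ∈ K ∧ ∀ z ∈ K, ‖x - p‖ ≤ ‖x - z‖) →
          (p' ∈ Ks i ∧ ∀ z ∈ Ks i, ‖x - p'‖ ≤ ‖x - z‖) →
          ‖p - p'‖ ≤ ε :=
  stmt12_general n K hKcomp hKconv hKint Ks hsub habsorb
end

section
/- Let p, q : ℝ → ℝ be continuous monotone nondecreasing functions, let μ_p and μ_q be their associated Lebesgue–Stieltjes measures, define x(s) = p(s) − q(s), and let t > 0 be such that x(s) ≥ 0 for all s ∈ [0, t]. Then, as ε ↓ 0, the quantity μ_p({s ∈ (0,t] : x(s) ≥ ε}) − μ_q({s ∈ (0,t] : x(s) ≥ ε}) converges to x(t) − x(0). (Equivalently, x(t) − x(0) = lim_{ε↓0} ∫_{(0,t]} 1{x(s) ≥ ε} dx(s), where the Stieltjes integral of the bounded-variation function x is the difference of the integrals against μ_p and μ_q.) -/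
/-!
Write `x = p - q` and `E = (0,t) ∩ {x < ε}`. Up to the null set `{t}`, `E` is the complement in
`(0,t]` of the superlevel set, so it suffices to show `|μ_p E - μ_q E| ≤ ε`. Each connected
component of the bounded open set `E` is an interval `(a,b)` with `x ≤ ε` on `[a,b]`, `a = 0` or
`x a = ε`, and `b = t` or `x b = ε`. By continuity of `p` and `q`,
`μ_p (a,b) - μ_q (a,b) = x b - x a`, which is `≤ 0` except on the one component starting at `0`,
where it is `≤ ε - x 0 ≤ ε`; symmetrically it is `≥ 0` except on the one component ending at `t`,
where it is `≥ x t - ε ≥ -ε`. Compact subsets of `E` meet only finitely many components, so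
inner regularity avoids summing over countably many of them.
-/

open MeasureTheory Filter Set Topology

def IsLebesgueStieltjes (μ : Measure ℝ) (f : ℝ → ℝ) : Prop :=
  ∀ a b : ℝ, a ≤ b → μ (Ioc a b) = ENNReal.ofReal (f b - f a)

namespace IsLebesgueStieltjes

variable {μ : Measure ℝ} {f : ℝ → ℝ}

theorem isLocallyFiniteMeasure (h : IsLebesgueStieltjes μ f) : IsLocallyFiniteMeasure μ :=
  ⟨fun x => ⟨Ioc (x - 1) (x + 1), Ioc_mem_nhds (by linarith) (by linarith),
    by rw [h _ _ (by linarith)]; exact ENNReal.ofReal_lt_top⟩⟩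

theorem measure_singleton (h : IsLebesgueStieltjes μ f) (hf : Continuous f) (a : ℝ) :
    μ {a} = 0 := by
  have hlim : Tendsto (fun δ => ENNReal.ofReal (f a - f (a - δ))) (𝓝[>] 0) (𝓝 0) := by
    refine (Continuous.tendsto' ?_ 0 0 (by simp)).mono_left nhdsWithin_le_nhds
    exact ENNReal.continuous_ofReal.comp (by fun_prop)
  refine le_antisymm (ge_of_tendsto hlim (eventually_nhdsWithin_of_forall fun δ hδ => ?_)) bot_le
  rw [← h _ _ (by linarith [mem_Ioi.1 hδ])]
  exact measure_mono (singleton_subset_iff.2 ⟨by linarith [mem_Ioi.1 hδ], le_rfl⟩)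

theorem nullSingletonClass (h : IsLebesgueStieltjes μ f) (hf : Continuous f) :
    NullSingletonClass μ :=
  ⟨h.measure_singleton hf⟩

theorem measure_Ioo (h : IsLebesgueStieltjes μ f) (hf : Continuous f) {a b : ℝ} (hab : a ≤ b) :
    μ (Ioo a b) = ENNReal.ofReal (f b - f a) := by
  have := h.nullSingletonClass hf
  rw [measure_congr Ioo_ae_eq_Ioc, h a b hab]

theorem measureReal_Ioc_inter_add_Ioo_sdiff (h : IsLebesgueStieltjes μ f) (hf : Continuous f)
    (hfm : Monotone f) {a b : ℝ} (hab : a ≤ b) {S : Set ℝ} (hS : MeasurableSet S) :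
    μ.real (Ioc a b ∩ S) + μ.real (Ioo a b \ S) = f b - f a := by
  have := h.nullSingletonClass hf
  rw [measureReal_congr (Ioo_ae_eq_Ioc.diff (ae_eq_refl S)),
    measureReal_inter_add_sdiff hS (by rw [h a b hab]; exact ENNReal.ofReal_ne_top),
    measureReal_def, h a b hab, ENNReal.toReal_ofReal (sub_nonneg.2 (hfm hab))]

end IsLebesgueStieltjes

structure IsComponentIoo (U : Set ℝ) (a b : ℝ) : Prop where
  lt : a < b
  Ioo_subset : Ioo a b ⊆ U
  left_notMem : a ∉ U
  right_notMem : b ∉ U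

theorem IsComponentIoo.Icc_subset_closure {U : Set ℝ} {a b : ℝ} (h : IsComponentIoo U a b) :
    Icc a b ⊆ closure U :=
  closure_Ioo h.lt.ne ▸ closure_mono h.Ioo_subset

section Components

variable {U : Set ℝ} {x : ℝ}

theorem IsOpen.connectedComponentIn_eq_Ioo (hU : IsOpen U) (hUb : Bornology.IsBounded U)
    (hx : x ∈ U) :
    connectedComponentIn U x =
      Ioo (sInf (connectedComponentIn U x)) (sSup (connectedComponentIn U x)) := by
  set C := connectedComponentIn U x
  have hCb : Bornology.IsBounded C := hUb.subset (connectedComponentIn_subset U x)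
  refine subset_antisymm ?_ ?_
  · calc C = interior C := hU.connectedComponentIn.interior_eq.symm
      _ ⊆ interior (Icc (sInf C) (sSup C)) :=
        interior_mono (subset_Icc_csInf_csSup hCb.bddBelow hCb.bddAbove)
      _ = Ioo (sInf C) (sSup C) := interior_Icc
  · exact (isConnected_connectedComponentIn_iff.2 hx).Ioo_csInf_csSup_subset
      hCb.bddBelow hCb.bddAbove

theorem IsOpen.isComponentIoo_connectedComponentIn (hU : IsOpen U)
    (hUb : Bornology.IsBounded U) (hx : x ∈ U) :
    IsComponentIoo U (sInf (connectedComponentIn U x)) (sSup (connectedComponentIn U x)) := by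
  have hC := hU.connectedComponentIn_eq_Ioo hUb hx
  set a := sInf (connectedComponentIn U x)
  set b := sSup (connectedComponentIn U x)
  have hxC : x ∈ Ioo a b := hC ▸ mem_connectedComponentIn hx
  have hCU : Ioo a b ⊆ U := hC ▸ connectedComponentIn_subset U x
  have hab : a < b := hxC.1.trans hxC.2
  refine ⟨hab, hCU, fun ha => ?_, fun hb => ?_⟩
  · have hIco : Ico a b ⊆ U := Ioo_insert_left hab ▸ insert_subset ha hCU
    have := isPreconnected_Ico.subset_connectedComponentIn (Ioo_subset_Ico_self hxC) hIco
    exact lt_irrefl a ((hC ▸ this) (left_mem_Ico.2 hab)).1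
  · have hIoc : Ioc a b ⊆ U := Ioo_insert_right hab ▸ insert_subset hb hCU
    have := isPreconnected_Ioc.subset_connectedComponentIn (Ioo_subset_Ioc_self hxC) hIoc
    exact lt_irrefl b ((hC ▸ this) (right_mem_Ioc.2 hab)).2

theorem IsCompact.exists_finset_isComponentIoo_cover {K : Set ℝ} (hK : IsCompact K)
    (hU : IsOpen U) (hUb : Bornology.IsBounded U) (hKU : K ⊆ U) :
    ∃ G : Finset (ℝ × ℝ), (G : Set (ℝ × ℝ)).PairwiseDisjoint (fun g => Ioo g.1 g.2) ∧
      (∀ g ∈ G, IsComponentIoo U g.1 g.2) ∧ K ⊆ ⋃ g ∈ G, Ioo g.1 g.2 := by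
  classical
  let I : ℝ → ℝ × ℝ := fun x =>
    (sInf (connectedComponentIn U x), sSup (connectedComponentIn U x))
  have hI : ∀ x ∈ U, Ioo (I x).1 (I x).2 = connectedComponentIn U x := fun x hx =>
    (hU.connectedComponentIn_eq_Ioo hUb hx).symm
  obtain ⟨T, hTK, hKT⟩ := hK.elim_nhds_subcover (connectedComponentIn U) fun x hx =>
    hU.connectedComponentIn.mem_nhds (mem_connectedComponentIn (hKU hx))
  refine ⟨T.image I, ?_, ?_, ?_⟩
  · intro g hg g' hg' hne
    obtain ⟨x, hxT, rfl⟩ := Finset.mem_image.1 hg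
    obtain ⟨y, hyT, rfl⟩ := Finset.mem_image.1 hg'
    rw [Function.onFun, hI x (hKU (hTK x hxT)), hI y (hKU (hTK y hyT))]
    refine not_not.1 fun hxy => hne ?_
    obtain ⟨z, hzx, hzy⟩ := not_disjoint_iff.1 hxy
    simp only [I, connectedComponentIn_eq hzx, connectedComponentIn_eq hzy]
  · intro g hg
    obtain ⟨x, hxT, rfl⟩ := Finset.mem_image.1 hg
    exact hU.isComponentIoo_connectedComponentIn hUb (hKU (hTK x hxT))
  · intro k hk
    obtain ⟨x, hxT, hkx⟩ := mem_iUnion₂.1 (hKT hk)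
    refine mem_iUnion₂.2 ⟨I x, Finset.mem_image_of_mem I hxT, ?_⟩
    rwa [hI x (hKU (hTK x hxT))]

end Components

theorem Finset.sum_le_of_nonpos_off_subsingleton {ι M : Type*} [AddCommMonoid M] [PartialOrder M]
    [IsOrderedAddMonoid M] {s : Finset ι} {f : ι → M} {P : ι → Prop} {c : M} (hc : 0 ≤ c)
    (hP : {i | i ∈ s ∧ P i}.Subsingleton) (hPc : ∀ i ∈ s, P i → f i ≤ c)
    (hnP : ∀ i ∈ s, ¬P i → f i ≤ 0) : ∑ i ∈ s, f i ≤ c := by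
  classical
  by_cases h : ∃ i ∈ s, P i
  · obtain ⟨i, hi, hPi⟩ := h
    rw [← Finset.add_sum_erase s f hi, ← add_zero c]
    refine add_le_add (hPc i hi hPi) (Finset.sum_nonpos fun j hj => ?_)
    obtain ⟨hji, hjs⟩ := Finset.mem_erase.1 hj
    exact hnP j hjs fun hPj => hji (hP ⟨hjs, hPj⟩ ⟨hi, hPi⟩)
  · push Not at h
    exact (Finset.sum_nonpos fun i hi => hnP i hi (h i hi)).trans hc

namespace IsComponentIoo

variable {w : ℝ → ℝ} {c d ε a b : ℝ}

theorem subset_Icc_inter_sublevel (hw : Continuous w)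
    (h : IsComponentIoo (Ioo c d ∩ {s | w s < ε}) a b) :
    Icc a b ⊆ Icc c d ∩ {s | w s ≤ ε} :=
  h.Icc_subset_closure.trans <| (closure_inter_subset_inter_closure _ _).trans <|
    inter_subset_inter (closure_minimal Ioo_subset_Icc_self isClosed_Icc)
      (closure_lt_subset_le hw continuous_const)

theorem apply_left_le (hw : Continuous w) (h : IsComponentIoo (Ioo c d ∩ {s | w s < ε}) a b) :
    w a ≤ ε :=
  (h.subset_Icc_inter_sublevel hw (left_mem_Icc.2 h.lt.le)).2

theorem apply_right_le (hw : Continuous w) (h : IsComponentIoo (Ioo c d ∩ {s | w s < ε}) a b) :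
    w b ≤ ε :=
  (h.subset_Icc_inter_sublevel hw (right_mem_Icc.2 h.lt.le)).2

theorem left_eq_or_apply_eq (hw : Continuous w)
    (h : IsComponentIoo (Ioo c d ∩ {s | w s < ε}) a b) : a = c ∨ w a = ε := by
  obtain ⟨⟨hca, -⟩, -⟩ := h.subset_Icc_inter_sublevel hw (left_mem_Icc.2 h.lt.le)
  obtain ⟨⟨-, hbd⟩, -⟩ := h.subset_Icc_inter_sublevel hw (right_mem_Icc.2 h.lt.le)
  refine hca.eq_or_lt.imp Eq.symm fun hca => (h.apply_left_le hw).antisymm ?_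
  exact not_lt.1 fun hlt => h.left_notMem ⟨⟨hca, h.lt.trans_le hbd⟩, hlt⟩

theorem right_eq_or_apply_eq (hw : Continuous w)
    (h : IsComponentIoo (Ioo c d ∩ {s | w s < ε}) a b) : b = d ∨ w b = ε := by
  obtain ⟨⟨hca, -⟩, -⟩ := h.subset_Icc_inter_sublevel hw (left_mem_Icc.2 h.lt.le)
  obtain ⟨⟨-, hbd⟩, -⟩ := h.subset_Icc_inter_sublevel hw (right_mem_Icc.2 h.lt.le)
  refine hbd.eq_or_lt.imp id fun hbd => (h.apply_right_le hw).antisymm ?_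
  exact not_lt.1 fun hlt => h.right_notMem ⟨⟨hca.trans_lt h.lt, hbd⟩, hlt⟩

end IsComponentIoo

section SumOverComponents

variable {w : ℝ → ℝ} {c d ε : ℝ} {G : Finset (ℝ × ℝ)}

theorem sum_apply_snd_sub_apply_fst_le (hw : Continuous w) (hε : 0 ≤ ε) (hc : 0 ≤ w c)
    (hG : (G : Set (ℝ × ℝ)).PairwiseDisjoint (fun g => Ioo g.1 g.2))
    (hcomp : ∀ g ∈ G, IsComponentIoo (Ioo c d ∩ {s | w s < ε}) g.1 g.2) :
    ∑ g ∈ G, (w g.2 - w g.1) ≤ ε := by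
  refine Finset.sum_le_of_nonpos_off_subsingleton (P := fun g => g.1 = c) hε ?_ ?_ ?_
  · rintro g ⟨hg, hgc⟩ g' ⟨hg', hg'c⟩
    refine hG.elim hg hg' (not_disjoint_iff_nonempty_inter.2 ?_)
    rw [Ioo_inter_Ioo, hgc, hg'c, max_self]
    exact nonempty_Ioo.2 (lt_min (hgc ▸ (hcomp g hg).lt) (hg'c ▸ (hcomp g' hg').lt))
  · intro g hg hgc
    rw [hgc]
    linarith [(hcomp g hg).apply_right_le hw]
  · intro g hg hgc
    linarith [(hcomp g hg).apply_right_le hw,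
      ((hcomp g hg).left_eq_or_apply_eq hw).resolve_left hgc]

theorem sum_apply_fst_sub_apply_snd_le (hw : Continuous w) (hε : 0 ≤ ε) (hd : 0 ≤ w d)
    (hG : (G : Set (ℝ × ℝ)).PairwiseDisjoint (fun g => Ioo g.1 g.2))
    (hcomp : ∀ g ∈ G, IsComponentIoo (Ioo c d ∩ {s | w s < ε}) g.1 g.2) :
    ∑ g ∈ G, (w g.1 - w g.2) ≤ ε := by
  refine Finset.sum_le_of_nonpos_off_subsingleton (P := fun g => g.2 = d) hε ?_ ?_ ?_
  · rintro g ⟨hg, hgd⟩ g' ⟨hg', hg'd⟩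
    refine hG.elim hg hg' (not_disjoint_iff_nonempty_inter.2 ?_)
    rw [Ioo_inter_Ioo, hgd, hg'd, min_self]
    exact nonempty_Ioo.2 (max_lt (hgd ▸ (hcomp g hg).lt) (hg'd ▸ (hcomp g' hg').lt))
  · intro g hg hgd
    rw [hgd]
    linarith [(hcomp g hg).apply_left_le hw]
  · intro g hg hgd
    linarith [(hcomp g hg).apply_left_le hw,
      ((hcomp g hg).right_eq_or_apply_eq hw).resolve_left hgd]

end SumOverComponents

namespace IsLebesgueStieltjes

variable {μ μ₁ μ₂ : Measure ℝ} {f f₁ f₂ : ℝ → ℝ}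

theorem measure_biUnion_Ioo (h : IsLebesgueStieltjes μ f)
    (hf : Continuous f) (hfm : Monotone f) {G : Finset (ℝ × ℝ)}
    (hG : (G : Set (ℝ × ℝ)).PairwiseDisjoint (fun g => Ioo g.1 g.2))
    (hle : ∀ g ∈ G, g.1 ≤ g.2) :
    μ (⋃ g ∈ G, Ioo g.1 g.2) = ENNReal.ofReal (∑ g ∈ G, (f g.2 - f g.1)) := by
  rw [measure_biUnion_finset hG fun _ _ => measurableSet_Ioo,
    ENNReal.ofReal_sum_of_nonneg fun g hg => sub_nonneg.2 (hfm (hle g hg))]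
  exact Finset.sum_congr rfl fun g hg => h.measure_Ioo hf (hle g hg)

theorem measure_le_add_of_sum_le (h₁ : IsLebesgueStieltjes μ₁ f₁)
    (h₂ : IsLebesgueStieltjes μ₂ f₂) (hf₁ : Continuous f₁) (hf₂ : Continuous f₂)
    (hm₁ : Monotone f₁) (hm₂ : Monotone f₂) {U : Set ℝ} (hU : IsOpen U)
    (hUb : Bornology.IsBounded U) {C : ℝ}
    (hsum : ∀ G : Finset (ℝ × ℝ), (G : Set (ℝ × ℝ)).PairwiseDisjoint (fun g => Ioo g.1 g.2) →
      (∀ g ∈ G, IsComponentIoo U g.1 g.2) →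
      ∑ g ∈ G, (f₁ g.2 - f₁ g.1) ≤ ∑ g ∈ G, (f₂ g.2 - f₂ g.1) + C) :
    μ₁ U ≤ μ₂ U + ENNReal.ofReal C := by
  have := h₁.isLocallyFiniteMeasure
  rw [hU.measure_eq_iSup_isCompact μ₁]
  refine iSup₂_le fun K hKU => iSup_le fun hK => ?_
  obtain ⟨G, hG, hcomp, hKG⟩ := hK.exists_finset_isComponentIoo_cover hU hUb hKU
  have hle : ∀ g ∈ G, g.1 ≤ g.2 := fun g hg => (hcomp g hg).lt.le
  calc μ₁ K ≤ μ₁ (⋃ g ∈ G, Ioo g.1 g.2) := measure_mono hKG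
    _ = ENNReal.ofReal (∑ g ∈ G, (f₁ g.2 - f₁ g.1)) := h₁.measure_biUnion_Ioo hf₁ hm₁ hG hle
    _ ≤ ENNReal.ofReal (∑ g ∈ G, (f₂ g.2 - f₂ g.1)) + ENNReal.ofReal C :=
      (ENNReal.ofReal_le_ofReal (hsum G hG hcomp)).trans ENNReal.ofReal_add_le
    _ = μ₂ (⋃ g ∈ G, Ioo g.1 g.2) + ENNReal.ofReal C := by
      rw [h₂.measure_biUnion_Ioo hf₂ hm₂ hG hle]
    _ ≤ μ₂ U + ENNReal.ofReal C := by
      gcongr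
      exact iUnion₂_subset fun g hg => (hcomp g hg).Ioo_subset

end IsLebesgueStieltjes

theorem abs_measureReal_superlevel_sub_le {p q : ℝ → ℝ} {μp μq : Measure ℝ}
    (hμp : IsLebesgueStieltjes μp p) (hμq : IsLebesgueStieltjes μq q)
    (hpc : Continuous p) (hqc : Continuous q) (hpm : Monotone p) (hqm : Monotone q)
    {t : ℝ} (ht : 0 ≤ t) (h0 : 0 ≤ p 0 - q 0) (ht' : 0 ≤ p t - q t) {ε : ℝ} (hε : 0 < ε) :
    |μp.real {s ∈ Ioc 0 t | ε ≤ p s - q s} - μq.real {s ∈ Ioc 0 t | ε ≤ p s - q s}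
      - ((p t - q t) - (p 0 - q 0))| ≤ ε := by
  set w : ℝ → ℝ := fun s => p s - q s
  have hw : Continuous w := hpc.sub hqc
  set E := Ioo 0 t ∩ {s | w s < ε}
  have hE : IsOpen E := isOpen_Ioo.inter (isOpen_lt hw continuous_const)
  have hEb : Bornology.IsBounded E := Metric.isBounded_Ioo 0 t |>.subset inter_subset_left
  have hpq : μp E ≤ μq E + ENNReal.ofReal ε :=
    hμp.measure_le_add_of_sum_le hμq hpc hqc hpm hqm hE hEb fun G hG hcomp => by
      have := sum_apply_snd_sub_apply_fst_le hw hε.le h0 hG hcomp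
      rw [← sub_le_iff_le_add', ← Finset.sum_sub_distrib]
      convert this using 2
      ring
  have hqp : μq E ≤ μp E + ENNReal.ofReal ε :=
    hμq.measure_le_add_of_sum_le hμp hqc hpc hqm hpm hE hEb fun G hG hcomp => by
      have := sum_apply_fst_sub_apply_snd_le hw hε.le ht' hG hcomp
      rw [← sub_le_iff_le_add', ← Finset.sum_sub_distrib]
      convert this using 2
      ring
  have hS : MeasurableSet {s | ε ≤ w s} := measurableSet_le measurable_const hw.measurable
  have hES : E = Ioo 0 t \ {s | ε ≤ w s} := by ext; simp [E, not_le]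
  have hp := hμp.measureReal_Ioc_inter_add_Ioo_sdiff hpc hpm ht hS
  have hq := hμq.measureReal_Ioc_inter_add_Ioo_sdiff hqc hqm ht hS
  rw [← hES] at hp hq
  have := hμp.isLocallyFiniteMeasure
  have := hμq.isLocallyFiniteMeasure
  have hpq' := ENNReal.toReal_le_add hpq hEb.measure_lt_top.ne ENNReal.ofReal_ne_top
  have hqp' := ENNReal.toReal_le_add hqp hEb.measure_lt_top.ne ENNReal.ofReal_ne_top
  simp only [← measureReal_def, ENNReal.toReal_ofReal hε.le] at hpq' hqp'
  change |μp.real (Ioc 0 t ∩ {s | ε ≤ w s}) - μq.real (Ioc 0 t ∩ {s | ε ≤ w s}) - _| ≤ ε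
  rw [abs_le]
  constructor <;> linarith

/-- **Stieltjes integration away from zero.**
Let `p, q : ℝ → ℝ` be continuous monotone nondecreasing with Lebesgue–Stieltjes measures
`μ_p, μ_q` (characterized by `μ_p (a,b] = p b - p a`), set `x = p - q`, and let `t > 0` be
such that `x ≥ 0` on `[0, t]`.  Then, as `ε ↓ 0`,
`μ_p {s ∈ (0,t] | x s ≥ ε} - μ_q {s ∈ (0,t] | x s ≥ ε} → x t - x 0`. -/
theorem stmt13 (p q : ℝ → ℝ) (hpc : Continuous p) (hqc : Continuous q)
    (hpm : Monotone p) (hqm : Monotone q)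
    (μp μq : Measure ℝ)
    (hμp : ∀ a b : ℝ, a ≤ b → μp (Set.Ioc a b) = ENNReal.ofReal (p b - p a))
    (hμq : ∀ a b : ℝ, a ≤ b → μq (Set.Ioc a b) = ENNReal.ofReal (q b - q a))
    (t : ℝ) (ht : 0 < t)
    (hnn : ∀ s ∈ Set.Icc (0 : ℝ) t, 0 ≤ p s - q s) :
    Tendsto (fun ε : ℝ =>
        (μp {s ∈ Set.Ioc (0 : ℝ) t | ε ≤ p s - q s}).toReal -
        (μq {s ∈ Set.Ioc (0 : ℝ) t | ε ≤ p s - q s}).toReal)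
      (nhdsWithin 0 (Set.Ioi 0))
      (nhds ((p t - q t) - (p 0 - q 0))) := by
  rw [← tendsto_sub_nhds_zero_iff]
  refine squeeze_zero_norm' (eventually_nhdsWithin_of_forall fun ε hε => ?_)
    (tendsto_nhdsWithin_of_tendsto_nhds tendsto_id)
  exact abs_measureReal_superlevel_sub_le hμp hμq hpc hqc hpm hqm ht.le
    (hnn 0 (left_mem_Icc.2 ht.le)) (hnn t (right_mem_Icc.2 ht.le)) hε
end
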